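/- arXiv:2102.00935 — 9 statements merged into one kernel-verified Lean document; each statement's English description precedes it below -/
import Mathlib

section
/- For partitions λ and μ of the same positive integer n with at most r parts, the Kostka coefficient K_{λ,μ} (the number of semistandard Young tableaux of shape λ and content μ) is positive if and only if λ dominates μ, i.e., for every t with 1 ≤ t ≤ r, the sum of the first t parts of λ is at least the sum of the first t parts of μ. -/
/-!
Necessity: columns of a semistandard tableau strictly increase, so the entries `< t` lie in the
first `t` rows.

Sufficiency: a tableau of shape `λ` and content `μ` amounts to a chain of shapes
`0 = ρ₀ ⊆ ρ₁ ⊆ ⋯ ⊆ ρᵣ = λ` in which `ρₖ₊₁ / ρₖ` (the cells holding `k`) is a horizontal strip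
of size `μₖ`. If `λ` has at most `r + 1` rows and dominates `μ`, removing the bottom cell of each
of the first `μᵣ` columns takes off a horizontal strip and leaves a partition with at most `r`
rows that still dominates `μ`, because `μ` is decreasing; iterating builds the chain.
-/

open Finset

structure IsHorizontalStrip (outer inner : ℕ → ℕ) : Prop where
  le : ∀ i, inner i ≤ outer i
  succ_le : ∀ i, outer (i + 1) ≤ inner i

lemma IsHorizontalStrip.antitone {outer inner : ℕ → ℕ} (h : IsHorizontalStrip outer inner) :
    Antitone inner :=
  antitone_nat_of_succ_le fun i => (h.le (i + 1)).trans (h.succ_le i)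

lemma isHorizontalStrip_self {f : ℕ → ℕ} (hf : Antitone f) : IsHorizontalStrip f f :=
  ⟨fun _ => le_rfl, fun i => hf i.le_succ⟩

/-- Row `i` loses `min s (f i) - min s (f (i + 1))` cells, the number of columns `j < s` whose
bottom cell lies in row `i`: this removes the bottom cell of each of the first `s` columns. -/
def removeStrip (s : ℕ) (f : ℕ → ℕ) (i : ℕ) : ℕ :=
  f i - min s (f i) + min s (f (i + 1))

lemma isHorizontalStrip_removeStrip {f : ℕ → ℕ} (hf : Antitone f) (s : ℕ) :
    IsHorizontalStrip f (removeStrip s f) := by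
  have h := fun i => hf (Nat.le_add_right i 1)
  exact ⟨fun i => by have := h i; unfold removeStrip; omega,
    fun i => by have := h i; unfold removeStrip; omega⟩

lemma sum_range_removeStrip_add (s : ℕ) (f : ℕ → ℕ) (t : ℕ) :
    ∑ i ∈ range t, removeStrip s f i + min s (f 0) = ∑ i ∈ range t, f i + min s (f t) := by
  induction t with
  | zero => simp
  | succ t ih =>
    simp only [sum_range_succ, removeStrip] at ih ⊢
    omega

structure Dominates (r : ℕ) (lam mu : ℕ → ℕ) : Prop where
  antitone : Antitone lam
  eq_zero : ∀ i, r ≤ i → lam i = 0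
  sum_eq : ∑ i ∈ range r, lam i = ∑ i ∈ range r, mu i
  sum_le : ∀ t ≤ r, ∑ i ∈ range t, mu i ≤ ∑ i ∈ range t, lam i

lemma Dominates.removeStrip {r : ℕ} {lam mu : ℕ → ℕ} (hmu : Antitone mu)
    (h : Dominates (r + 1) lam mu) : Dominates r (removeStrip (mu r) lam) mu := by
  have hfirst : mu r ≤ lam 0 := by
    have := h.sum_le 1 (by omega)
    simp only [sum_range_one] at this
    exact (hmu (Nat.zero_le r)).trans this
  have hlast : lam r ≤ mu r := by
    have hr := h.sum_le r (by omega)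
    have heq := h.sum_eq
    simp only [sum_range_succ] at heq
    omega
  have hsum := sum_range_removeStrip_add (mu r) lam
  refine ⟨(isHorizontalStrip_removeStrip h.antitone _).antitone, fun i hi => ?_, ?_,
    fun t ht => ?_⟩
  · have h1 := h.eq_zero (i + 1) (by omega)
    have h2 := h.antitone hi
    simp only [_root_.removeStrip]
    omega
  · have h1 := hsum r
    have h2 := h.sum_eq
    simp only [sum_range_succ] at h2
    omega
  · have h1 := hsum t
    have h2 := h.sum_le t (by omega)
    have h3 := h.sum_le (t + 1) (by omega)
    have h4 := hmu (show t ≤ r by omega)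
    simp only [sum_range_succ] at h3
    omega

/-- `stripChain mu r lam k` is the shape `ρ k` of the chain `ρ 0 ⊆ ρ 1 ⊆ ⋯ ⊆ ρ r = lam` obtained
from `lam` by removing strips of sizes `mu (r - 1), …, mu 0` in turn. -/
def stripChain (mu : ℕ → ℕ) : ℕ → (ℕ → ℕ) → ℕ → ℕ → ℕ
  | 0, lam, _ => lam
  | r + 1, lam, k => if r < k then lam else stripChain mu r (removeStrip (mu r) lam) k

section stripChain

variable {mu : ℕ → ℕ} {r : ℕ} {lam : ℕ → ℕ}

lemma stripChain_of_le {k : ℕ} (hk : r ≤ k) : stripChain mu r lam k = lam := by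
  cases r with
  | zero => rfl
  | succ r => exact if_pos hk

lemma stripChain_succ_of_le {k : ℕ} (hk : k ≤ r) :
    stripChain mu (r + 1) lam k = stripChain mu r (removeStrip (mu r) lam) k :=
  if_neg (by omega)

variable (hmu : Antitone mu)
include hmu

lemma stripChain_zero (h : Dominates r lam mu) : stripChain mu r lam 0 = 0 := by
  induction r generalizing lam with
  | zero => exact funext fun i => h.eq_zero i (Nat.zero_le i)
  | succ r ih => rw [stripChain_succ_of_le (Nat.zero_le r), ih (h.removeStrip hmu)]

lemma isHorizontalStrip_stripChain (h : Dominates r lam mu) (k : ℕ) :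
    IsHorizontalStrip (stripChain mu r lam (k + 1)) (stripChain mu r lam k) := by
  induction r generalizing lam with
  | zero =>
    rw [stripChain_of_le (Nat.zero_le _), stripChain_of_le (Nat.zero_le _)]
    exact isHorizontalStrip_self h.antitone
  | succ r ih =>
    rcases lt_trichotomy k r with hk | rfl | hk
    · rw [stripChain_succ_of_le hk, stripChain_succ_of_le hk.le]
      exact ih (h.removeStrip hmu)
    · rw [stripChain_of_le le_rfl, stripChain_succ_of_le le_rfl, stripChain_of_le le_rfl]
      exact isHorizontalStrip_removeStrip h.antitone _
    · rw [stripChain_of_le (by omega), stripChain_of_le (by omega)]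
      exact isHorizontalStrip_self h.antitone

lemma stripChain_le (h : Dominates r lam mu) (k i : ℕ) : stripChain mu r lam k i ≤ lam i := by
  have hmono : Monotone fun k => stripChain mu r lam k i :=
    monotone_nat_of_le_succ fun k => (isHorizontalStrip_stripChain hmu h k).le i
  simpa only [stripChain_of_le (le_max_right k r)] using hmono (le_max_left k r)

lemma sum_stripChain (h : Dominates r lam mu) {k : ℕ} (hk : k ≤ r) :
    ∑ i ∈ range r, stripChain mu r lam k i = ∑ i ∈ range k, mu i := by
  induction r generalizing lam with
  | zero => simp [Nat.le_zero.mp hk]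
  | succ r ih =>
    rcases hk.eq_or_lt with rfl | hk
    · rw [stripChain_of_le le_rfl, h.sum_eq]
    · have h' := h.removeStrip hmu
      have hlast : stripChain mu r (removeStrip (mu r) lam) k r = 0 :=
        Nat.eq_zero_of_le_zero ((stripChain_le hmu h' k r).trans (h'.eq_zero r le_rfl).le)
      rw [stripChain_succ_of_le (by omega), sum_range_succ, hlast, add_zero,
        ih h' (by omega)]

lemma sum_stripChain_succ_sub (hmu0 : ∀ i, r ≤ i → mu i = 0) (h : Dominates r lam mu)
    (k : ℕ) :
    ∑ i ∈ range r, (stripChain mu r lam (k + 1) i - stripChain mu r lam k i) = mu k := by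
  by_cases hk : k < r
  · rw [sum_tsub_distrib _ fun i _ => (isHorizontalStrip_stripChain hmu h k).le i,
      sum_stripChain hmu h hk, sum_stripChain hmu h hk.le, sum_range_succ]
    omega
  · rw [stripChain_of_le (by omega), stripChain_of_le (by omega), hmu0 k (by omega)]
    simp

end stripChain

section chainTableau

/-- The entry of cell `(i, j)` is the index `k` of the strip `ρ (k + 1) / ρ k` containing it. -/
noncomputable def chainEntry (ρ : ℕ → ℕ → ℕ) (i j : ℕ) : ℕ :=
  sInf {k | j < ρ (k + 1) i}

variable {ρ : ℕ → ℕ → ℕ} (hzero : ρ 0 = 0) (hstrip : ∀ k, IsHorizontalStrip (ρ (k + 1)) (ρ k))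

lemma chainEntry_le {i j k : ℕ} (h : j < ρ (k + 1) i) : chainEntry ρ i j ≤ k :=
  Nat.sInf_le h

include hzero in
lemma chainEntry_spec {i j : ℕ} (hij : ∃ k, j < ρ k i) :
    ρ (chainEntry ρ i j) i ≤ j ∧ j < ρ (chainEntry ρ i j + 1) i := by
  obtain ⟨k, hk⟩ := hij
  obtain ⟨k, rfl⟩ : ∃ k', k = k' + 1 :=
    Nat.exists_eq_add_one.2 (Nat.pos_of_ne_zero fun h => by simp [h, hzero] at hk)
  refine ⟨?_, Nat.sInf_mem (s := {k | j < ρ (k + 1) i}) ⟨k, hk⟩⟩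
  rcases Nat.eq_zero_or_eq_succ_pred (chainEntry ρ i j) with h | h
  · simp [h, hzero]
  · have hlt : (chainEntry ρ i j).pred < sInf {k | j < ρ (k + 1) i} := by
      rw [← chainEntry]; omega
    rw [h]
    simpa using Nat.notMem_of_lt_sInf hlt

include hzero hstrip in
lemma chainEntry_eq_iff {i j k : ℕ} (hij : ∃ k, j < ρ k i) :
    chainEntry ρ i j = k ↔ ρ k i ≤ j ∧ j < ρ (k + 1) i := by
  have hmono : Monotone fun k => ρ k i := monotone_nat_of_le_succ fun k => (hstrip k).le i
  obtain ⟨h1, h2⟩ := chainEntry_spec hzero hij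
  refine ⟨by rintro rfl; exact ⟨h1, h2⟩, fun ⟨hk1, hk2⟩ => (chainEntry_le hk2).antisymm ?_⟩
  by_contra! hlt
  exact absurd ((hmono (Nat.succ_le_of_lt hlt)).trans hk1) (not_le.2 h2)

include hzero hstrip in
lemma chainEntry_lt_chainEntry_succ {i j : ℕ} (hij : ∃ k, j < ρ k (i + 1)) :
    chainEntry ρ i j < chainEntry ρ (i + 1) j := by
  obtain ⟨h1, h2⟩ := chainEntry_spec hzero hij
  set e := chainEntry ρ (i + 1) j
  have h3 := (hstrip e).succ_le i
  obtain ⟨e', he'⟩ : ∃ e', e = e' + 1 := by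
    refine Nat.exists_eq_add_one.2 (Nat.pos_of_ne_zero fun h => ?_)
    have : ρ 1 (i + 1) ≤ 0 := by simpa [h, hzero] using h3
    have : j < ρ 1 (i + 1) := by simpa [h] using h2
    omega
  rw [he'] at h2 h3 ⊢
  exact Nat.lt_succ_of_le (chainEntry_le (by omega))

noncomputable def chainTableau (Y : YoungDiagram) (hY : ∀ i j, (i, j) ∈ Y ↔ ∃ k, j < ρ k i) :
    SemistandardYoungTableau Y where
  entry := chainEntry ρ
  row_weak' {i j1 j2} hj hmem := by
    obtain ⟨-, h⟩ := chainEntry_spec hzero ((hY i j2).1 hmem)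
    exact chainEntry_le (hj.trans h)
  col_strict' {i1 i2 j} hi hmem := by
    induction i2 with
    | zero => omega
    | succ i2 ih =>
      have hlt := chainEntry_lt_chainEntry_succ hzero hstrip ((hY _ j).1 hmem)
      rcases (Nat.lt_succ_iff.1 hi).eq_or_lt with rfl | hi
      · exact hlt
      · exact (ih hi (Y.up_left_mem i2.le_succ le_rfl hmem)).trans hlt
  zeros' {i j} hmem := by
    have : {k | j < ρ (k + 1) i} = ∅ :=
      Set.eq_empty_of_forall_notMem fun k hk => hmem ((hY i j).2 ⟨k + 1, hk⟩)
    simp [chainEntry, this]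

lemma card_chainTableau_eq (Y : YoungDiagram) (hY : ∀ i j, (i, j) ∈ Y ↔ ∃ k, j < ρ k i)
    {r : ℕ} (hr : ∀ c ∈ Y.cells, c.1 < r) (k : ℕ) :
    #{c ∈ Y.cells | chainTableau hzero hstrip Y hY c.1 c.2 = k} =
      ∑ i ∈ range r, (ρ (k + 1) i - ρ k i) := by
  rw [card_eq_sum_card_fiberwise (f := Prod.fst) fun c hc => mem_coe.2 <|
    mem_range.2 (hr c (mem_filter.1 hc).1)]
  refine sum_congr rfl fun i _ => ?_
  suffices h : {c ∈ Y.cells | chainTableau hzero hstrip Y hY c.1 c.2 = k ∧ c.1 = i} =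
      {i} ×ˢ Ico (ρ k i) (ρ (k + 1) i) by
    rw [filter_filter, h, card_product, card_singleton, Nat.card_Ico, one_mul]
  ext ⟨i', j⟩
  simp only [mem_filter, YoungDiagram.mem_cells, mem_product, mem_singleton, mem_Ico]
  constructor
  · rintro ⟨hmem, he, rfl⟩
    exact ⟨rfl, (chainEntry_eq_iff hzero hstrip ((hY _ _).1 hmem)).1 he⟩
  · rintro ⟨rfl, hj⟩
    have hmem := (hY i' j).2 ⟨k + 1, hj.2⟩
    exact ⟨hmem, (chainEntry_eq_iff hzero hstrip ((hY _ _).1 hmem)).2 hj, rfl⟩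

end chainTableau

lemma card_filter_lt_eq_sum {α : Type*} (s : Finset α) (f : α → ℕ) (t : ℕ) :
    #{x ∈ s | f x < t} = ∑ k ∈ range t, #{x ∈ s | f x = k} := by
  rw [card_eq_sum_card_fiberwise (f := f) fun x hx => mem_coe.2 <| mem_range.2 (mem_filter.1 hx).2]
  refine sum_congr rfl fun k hk => ?_
  rw [filter_filter]
  exact congrArg card <| filter_congr fun x _ =>
    ⟨And.right, fun h => ⟨h ▸ mem_range.1 hk, h⟩⟩

lemma YoungDiagram.rowLen_eq_of_mem_iff (Y : YoungDiagram) {lam : ℕ → ℕ}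
    (hY : ∀ i j, (i, j) ∈ Y ↔ j < lam i) : Y.rowLen = lam :=
  funext fun i => eq_of_forall_lt_iff fun j => YoungDiagram.mem_iff_lt_rowLen.symm.trans (hY i j)

namespace SemistandardYoungTableau

variable {Y : YoungDiagram}

lemma le_apply_of_mem (T : SemistandardYoungTableau Y) {i j : ℕ} (h : (i, j) ∈ Y) :
    i ≤ T i j := by
  induction i with
  | zero => exact Nat.zero_le _
  | succ i ih =>
    exact (ih (Y.up_left_mem i.le_succ le_rfl h)).trans_lt (T.col_strict i.lt_succ_self h)

lemma sum_card_filter_eq_le_sum_rowLen (T : SemistandardYoungTableau Y) (t : ℕ) :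
    ∑ k ∈ range t, #{c ∈ Y.cells | T c.1 c.2 = k} ≤ ∑ i ∈ range t, Y.rowLen i := calc
  _ = #{c ∈ Y.cells | T c.1 c.2 < t} := (card_filter_lt_eq_sum _ _ t).symm
  _ ≤ #{c ∈ Y.cells | c.1 < t} := card_le_card <| monotone_filter_right _ fun c hc h =>
    (T.le_apply_of_mem ((YoungDiagram.mem_cells c).1 hc)).trans_lt h
  _ = ∑ i ∈ range t, Y.rowLen i := by
    rw [card_filter_lt_eq_sum]
    exact sum_congr rfl fun i _ => (Y.rowLen_eq_card).symm

lemma finite_setOf_forall_lt (r : ℕ) :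
    {T : SemistandardYoungTableau Y | ∀ c ∈ Y.cells, T c.1 c.2 < r}.Finite := by
  refine Set.Finite.of_finite_image (f := fun T (c : Y.cells) => T c.1.1 c.1.2) ?_ ?_
  · refine (Set.Finite.pi (t := fun _ => Set.Iio r) fun _ => Set.finite_Iio r).subset ?_
    rintro _ ⟨T, hT, rfl⟩ c -
    exact hT c.1 c.2
  · intro T₁ _ T₂ _ h
    ext i j
    by_cases hij : (i, j) ∈ Y
    · exact congrFun h ⟨(i, j), (YoungDiagram.mem_cells _).2 hij⟩
    · rw [T₁.zeros hij, T₂.zeros hij]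

lemma apply_lt_of_card_filter_eq {T : SemistandardYoungTableau Y} {mu : ℕ → ℕ} {r : ℕ}
    (hT : ∀ k, #{c ∈ Y.cells | T c.1 c.2 = k} = mu k) (hmu0 : ∀ i, r ≤ i → mu i = 0) :
    ∀ c ∈ Y.cells, T c.1 c.2 < r := fun c hc => by
  by_contra! h
  have hpos : 0 < #{c' ∈ Y.cells | T c'.1 c'.2 = T c.1 c.2} :=
    card_pos.2 ⟨c, mem_filter.2 ⟨hc, rfl⟩⟩
  rw [hT, hmu0 _ h] at hpos
  exact lt_irrefl 0 hpos

end SemistandardYoungTableau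

theorem stmt0_general (r n : ℕ) (lam mu : ℕ → ℕ)
    (hmu : Antitone mu)
    (hlam0 : ∀ i, r ≤ i → lam i = 0) (hmu0 : ∀ i, r ≤ i → mu i = 0)
    (hlamn : ∑ i ∈ Finset.range r, lam i = n) (hmun : ∑ i ∈ Finset.range r, mu i = n)
    (Y : YoungDiagram) (hY : ∀ i j, (i, j) ∈ Y ↔ j < lam i) :
    0 < Nat.card {T : SemistandardYoungTableau Y //
        ∀ k, (Y.cells.filter fun c => T c.1 c.2 = k).card = mu k} ↔
      ∀ t, 1 ≤ t → t ≤ r → ∑ i ∈ Finset.range t, mu i ≤ ∑ i ∈ Finset.range t, lam i := by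
  have hrowLen := Y.rowLen_eq_of_mem_iff hY
  constructor
  · rintro hpos t - -
    obtain ⟨⟨T, hT⟩⟩ := (Nat.card_pos_iff.1 hpos).1
    simpa only [hT, hrowLen] using T.sum_card_filter_eq_le_sum_rowLen t
  · intro hdom
    have h : Dominates r lam mu := ⟨hrowLen ▸ Y.rowLen_anti, hlam0, hlamn.trans hmun.symm,
      fun t ht => t.eq_zero_or_pos.elim (fun h0 => by simp [h0]) fun ht0 => hdom t ht0 ht⟩
    have hY' : ∀ i j, (i, j) ∈ Y ↔ ∃ k, j < stripChain mu r lam k i := fun i j =>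
      (hY i j).trans ⟨fun hj => ⟨r, by rwa [stripChain_of_le le_rfl]⟩,
        fun ⟨k, hk⟩ => hk.trans_le (stripChain_le hmu h k i)⟩
    have hr : ∀ c ∈ Y.cells, c.1 < r := fun c hc => lt_of_not_ge fun hc' => by
      simpa [hlam0 _ hc'] using (hY c.1 c.2).1 ((YoungDiagram.mem_cells c).1 hc)
    let T := chainTableau (stripChain_zero hmu h) (isHorizontalStrip_stripChain hmu h) Y hY'
    have hT : ∀ k, #{c ∈ Y.cells | T c.1 c.2 = k} = mu k := fun k => by
      rw [card_chainTableau_eq _ _ Y hY' hr, sum_stripChain_succ_sub hmu hmu0 h]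
    exact Nat.card_pos_iff.2 ⟨⟨T, hT⟩,
      ((SemistandardYoungTableau.finite_setOf_forall_lt r).subset fun T hT =>
        SemistandardYoungTableau.apply_lt_of_card_filter_eq hT hmu0).to_subtype⟩

/-- For partitions `lam` and `mu` of the same positive integer `n` with at most
`r` parts, the Kostka coefficient (the number of semistandard Young tableaux of shape `lam`
and content `mu`) is positive iff `lam` dominates `mu`. Partitions are represented as
antitone functions `ℕ → ℕ` vanishing from index `r` on (0-indexed parts), and the Young
diagram `Y` of `lam` is characterized by `(i, j) ∈ Y ↔ j < lam i`. Entries of tableaux are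
0-indexed: the content condition says there are `mu k` entries equal to `k`. -/
theorem stmt0 (r n : ℕ) (hn : 0 < n) (lam mu : ℕ → ℕ)
    (hlam : Antitone lam) (hmu : Antitone mu)
    (hlam0 : ∀ i, r ≤ i → lam i = 0) (hmu0 : ∀ i, r ≤ i → mu i = 0)
    (hlamn : ∑ i ∈ Finset.range r, lam i = n) (hmun : ∑ i ∈ Finset.range r, mu i = n)
    (Y : YoungDiagram) (hY : ∀ i j, (i, j) ∈ Y ↔ j < lam i) :
    0 < Nat.card {T : SemistandardYoungTableau Y //
        ∀ k, (Y.cells.filter fun c => T c.1 c.2 = k).card = mu k} ↔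
      ∀ t, 1 ≤ t → t ≤ r → ∑ i ∈ Finset.range t, mu i ≤ ∑ i ∈ Finset.range t, lam i :=
  stmt0_general r n lam mu hmu hlam0 hmu0 hlamn hmun Y hY
end

section
/- Let λ, μ be partitions with at most r parts and |λ| = |μ|. Then λ dominates μ if and only if there exists an r × λ₁ matrix with entries in {0,1} whose i-th row sums to μ_i and whose j-th column sums to λ'_j, where λ' is the conjugate partition of λ. -/
/-!
Both directions compare a 0-1 matrix with the Young diagram of `λ`, the 0-1 matrix with rows `λ_i`
and columns `λ'_j`, whose columns are filled from the top.

In any 0-1 matrix the first `t` rows hold at most `min t c_j` ones of column `j` (`c_j` the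
column sum), and the Young diagram attains this bound; summing over `j` gives dominance.

Conversely, start from the Young diagram and let `ν` be the current row sums, `ν ⊵ μ`. If `ν ≠ μ`,
take the first row `b` with `ν_b < μ_b` and any earlier row `a` with `ν_a > μ_a`. The partial sums
of `ν` exceed those of `μ` strictly on `(a, b]`, so moving one unit from `a` to `b` keeps `ν ⊵ μ`;
since `ν_b < μ_b ≤ μ_a < ν_a`, some column has a `1` in row `a` and a `0` in row `b`, and swapping
these two entries realises the move. The weight `∑ (r - i) ν_i` drops, so the process ends at `μ`.
-/

open Finset

namespace GaleRyser

def Dominates (r : ℕ) (ν μ : ℕ → ℕ) : Prop :=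
  ∀ t ≤ r, ∑ i ∈ range t, μ i ≤ ∑ i ∈ range t, ν i

def conj (r : ℕ) (lam : ℕ → ℕ) (j : ℕ) : ℕ :=
  #{i ∈ range r | j < lam i}

def HasBinaryMatrix (r n : ℕ) (row : ℕ → ℕ) (col : Fin n → ℕ) : Prop :=
  ∃ A : Fin r → Fin n → ℕ,
    (∀ i j, A i j ≤ 1) ∧ (∀ i, ∑ j, A i j = row i) ∧ ∀ j, ∑ i, A i j = col j

theorem card_filter_range_lt (n m : ℕ) : #{i ∈ range n | i < m} = min n m := by
  rw [range_eq_Ico, Ico_filter_lt, Nat.card_Ico, Nat.sub_zero]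

theorem sum_fin_ite_lt {n m : ℕ} (h : m ≤ n) :
    ∑ j : Fin n, (if (j : ℕ) < m then 1 else 0) = m := by
  rw [sum_boole, Nat.cast_id, Fin.card_filter_val_lt, min_eq_right h]

section Conjugate

variable {r : ℕ} {lam : ℕ → ℕ}

theorem lt_iff_lt_conj (hlam : Antitone lam) {i j : ℕ} (hi : i < r) :
    j < lam i ↔ i < conj r lam j := by
  constructor
  · intro hj
    calc i < #(range (i + 1)) := by simp
      _ ≤ conj r lam j := card_le_card fun k hk => by
        simp only [mem_range, mem_filter] at hk ⊢
        exact ⟨by omega, hj.trans_le (hlam (by omega))⟩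
  · intro hconj
    by_contra! hj
    have : conj r lam j ≤ #(range i) := card_le_card fun k hk => by
      simp only [mem_range, mem_filter] at hk ⊢
      by_contra! hik
      have := hlam hik
      omega
    rw [card_range] at this
    omega

theorem card_filter_range_lt_eq_min_conj (hlam : Antitone lam) {t : ℕ} (ht : t ≤ r) (j : ℕ) :
    #{i ∈ range t | j < lam i} = min t (conj r lam j) := by
  rw [← card_filter_range_lt]
  exact congrArg card <| filter_congr fun i hi => lt_iff_lt_conj hlam (by simp at hi; omega)

theorem sum_range_eq_sum_min_conj (hlam : Antitone lam) {t : ℕ} (ht : t ≤ r) :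
    ∑ i ∈ range t, lam i = ∑ j : Fin (lam 0), min t (conj r lam j) := calc
  ∑ i ∈ range t, lam i = ∑ i ∈ range t, ∑ j : Fin (lam 0), if (j : ℕ) < lam i then 1 else 0 :=
    sum_congr rfl fun i _ => (sum_fin_ite_lt (hlam (Nat.zero_le i))).symm
  _ = ∑ j : Fin (lam 0), #{i ∈ range t | (j : ℕ) < lam i} := by
    rw [sum_comm]
    simp_rw [sum_boole, Nat.cast_id]
  _ = ∑ j : Fin (lam 0), min t (conj r lam j) :=
    sum_congr rfl fun j _ => card_filter_range_lt_eq_min_conj hlam ht j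

theorem hasBinaryMatrix_young (hlam : Antitone lam) :
    HasBinaryMatrix r (lam 0) lam (fun j => conj r lam j) := by
  refine ⟨fun i j => if (j : ℕ) < lam i then 1 else 0, fun i j => by dsimp only; split <;> omega,
    fun i => sum_fin_ite_lt (hlam (Nat.zero_le _)), fun j => ?_⟩
  rw [Fin.sum_univ_eq_sum_range (fun i => if (j : ℕ) < lam i then 1 else 0), sum_boole,
    Nat.cast_id]
  rfl

end Conjugate

theorem HasBinaryMatrix.sum_range_le_sum_min {r n : ℕ} {row : ℕ → ℕ} {col : Fin n → ℕ}
    (h : HasBinaryMatrix r n row col) {t : ℕ} (ht : t ≤ r) :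
    ∑ i ∈ range t, row i ≤ ∑ j, min t (col j) := by
  obtain ⟨A, hA, hrow, hcol⟩ := h
  calc ∑ i ∈ range t, row i = ∑ i : Fin t, ∑ j, A (Fin.castLE ht i) j := by
        rw [← Fin.sum_univ_eq_sum_range]
        exact sum_congr rfl fun i _ => (hrow (Fin.castLE ht i)).symm
    _ = ∑ j, ∑ i : Fin t, A (Fin.castLE ht i) j := sum_comm
    _ ≤ ∑ j, min t (col j) := sum_le_sum fun j _ => le_min ?_ ?_
  · calc ∑ i : Fin t, A (Fin.castLE ht i) j ≤ ∑ _i : Fin t, 1 := sum_le_sum fun i _ => hA _ _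
      _ = t := by simp
  · rw [← hcol j]
    simpa [sum_map] using
      sum_le_sum_of_subset (f := fun i => A i j) (subset_univ (univ.map (Fin.castLEEmb ht)))

theorem dominates_of_hasBinaryMatrix {r : ℕ} {lam mu : ℕ → ℕ} (hlam : Antitone lam)
    (h : HasBinaryMatrix r (lam 0) mu (fun j => conj r lam j)) : Dominates r lam mu :=
  fun _ ht => (h.sum_range_le_sum_min ht).trans_eq (sum_range_eq_sum_min_conj hlam ht).symm

section Transfer

variable {m : Type*} [DecidableEq m]

theorem sum_mul_add_of_transfer {ν ν' : m → ℕ} {a b : m}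
    (h : ν' + Pi.single a 1 = ν + Pi.single b 1) (s : Finset m) (w : m → ℕ) :
    ∑ i ∈ s, w i * ν' i + (if a ∈ s then w a else 0) =
      ∑ i ∈ s, w i * ν i + (if b ∈ s then w b else 0) := by
  have := congrArg (fun f => ∑ i ∈ s, w i * f i) h
  simpa only [Pi.add_apply, mul_add, sum_add_distrib, Pi.single_apply, mul_ite, mul_one,
    mul_zero, sum_ite_eq'] using this

theorem exists_binary_transfer [Fintype m] {n : Type*} [Fintype n] [DecidableEq n]
    {A : m → n → ℕ} (hA : ∀ i j, A i j ≤ 1) {ν ν' : m → ℕ} (hrow : ∀ i, ∑ j, A i j = ν i)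
    {a b : m} (hab : a ≠ b) (hlt : ν b < ν a) (h : ν' + Pi.single a 1 = ν + Pi.single b 1) :
    ∃ A' : m → n → ℕ,
      (∀ i j, A' i j ≤ 1) ∧ (∀ i, ∑ j, A' i j = ν' i) ∧ ∀ j, ∑ i, A' i j = ∑ i, A i j := by
  obtain ⟨j₀, -, hj₀⟩ : ∃ j₀ ∈ univ, A b j₀ < A a j₀ :=
    exists_lt_of_sum_lt (by rwa [hrow, hrow])
  have ha : A a j₀ = 1 := by have := hA a j₀; omega
  have hb : A b j₀ = 0 := by omega
  refine ⟨fun i => Function.update (A i) j₀ (A (Equiv.swap a b i) j₀), fun i j => ?_,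
    fun i => ?_, fun j => ?_⟩
  · dsimp only
    rw [Function.update_apply]
    split_ifs <;> exact hA _ _
  · dsimp only
    have hupd := sum_update_of_mem (mem_univ j₀) (A i) (A (Equiv.swap a b i) j₀)
    have hsplit := sum_eq_add_sum_sdiff_singleton_of_mem (mem_univ j₀) (A i)
    have hν := congrFun h i
    have hswap : A i j₀ + (if i = b then 1 else 0) =
        A (Equiv.swap a b i) j₀ + (if i = a then 1 else 0) := by
      rcases eq_or_ne i a with rfl | hia
      · simp [hab, ha, hb]
      rcases eq_or_ne i b with rfl | hib
      · simp [hab.symm, ha, hb]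
      · simp [Equiv.swap_apply_of_ne_of_ne hia hib, hia, hib]
    simp only [Pi.add_apply, Pi.single_apply, ← hrow i] at hν
    omega
  · by_cases hj : j = j₀
    · subst hj
      simpa using Equiv.sum_comp (Equiv.swap a b) (fun i => A i j)
    · simp [hj]

end Transfer

section Dominance

variable {r : ℕ} {ν μ : ℕ → ℕ}

theorem exists_transfer_pair (hμ : Antitone μ) (hdom : Dominates r ν μ)
    (htot : ∑ i ∈ range r, ν i = ∑ i ∈ range r, μ i) (hne : ∃ i < r, ν i ≠ μ i) :
    ∃ a b, a < b ∧ b < r ∧ ν b < ν a ∧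
      ∀ t, a < t → t ≤ b → ∑ i ∈ range t, μ i < ∑ i ∈ range t, ν i := by
  have hdef : ∃ b, b < r ∧ ν b < μ b := by
    by_contra! hge
    obtain ⟨i, hi, hne⟩ := hne
    exact hne ((sum_eq_sum_iff_of_le fun k hk => hge k (mem_range.1 hk)).1 htot.symm i
      (mem_range.2 hi)).symm
  obtain ⟨hbr, hb⟩ := Nat.find_spec hdef
  set b := Nat.find hdef
  have hle : ∀ i < b, μ i ≤ ν i := fun i hi => by
    have := Nat.find_min hdef hi
    omega
  obtain ⟨a, ha, hexc⟩ : ∃ a ∈ range b, μ a < ν a := by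
    apply exists_lt_of_sum_lt
    have := hdom (b + 1) hbr
    rw [sum_range_succ, sum_range_succ] at this
    omega
  rw [mem_range] at ha
  refine ⟨a, b, ha, hbr, by linarith [hμ ha.le], fun t hat htb => ?_⟩
  exact sum_lt_sum (fun i hi => hle i (by simp at hi; omega)) ⟨a, mem_range.2 hat, hexc⟩

theorem Dominates.of_transfer {ν' : ℕ → ℕ} {a b : ℕ} (hdom : Dominates r ν μ)
    (h : ν' + Pi.single a 1 = ν + Pi.single b 1) (hab : a < b)
    (hstrict : ∀ t, a < t → t ≤ b → ∑ i ∈ range t, μ i < ∑ i ∈ range t, ν i) :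
    Dominates r ν' μ := by
  intro t ht
  have hsum := sum_mul_add_of_transfer h (range t) 1
  simp only [Pi.one_apply, one_mul, mem_range] at hsum
  have := hdom t ht
  by_cases hat : a < t
  · by_cases hbt : b < t
    · simp only [hat, hbt, if_true] at hsum
      omega
    · have := hstrict t hat (by omega)
      simp only [hat, hbt, if_true, if_false] at hsum
      omega
  · simp only [hat, show ¬b < t by omega, if_false] at hsum
    omega

theorem HasBinaryMatrix.of_dominates {n : ℕ} {col : Fin n → ℕ} (hμ : Antitone μ)
    (h : HasBinaryMatrix r n ν col) (hdom : Dominates r ν μ)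
    (htot : ∑ i ∈ range r, ν i = ∑ i ∈ range r, μ i) : HasBinaryMatrix r n μ col := by
  induction hΦ : ∑ i ∈ range r, (r - i) * ν i using Nat.strong_induction_on generalizing ν with
  | _ Φ ih =>
  obtain ⟨A, hA, hrow, hcol⟩ := h
  by_cases hne : ∃ i < r, ν i ≠ μ i
  · obtain ⟨a, b, hab, hbr, hlt, hstrict⟩ := exists_transfer_pair hμ hdom htot hne
    obtain ⟨ν', hν'⟩ : ∃ ν' : ℕ → ℕ, ν' + Pi.single a 1 = ν + Pi.single b 1 := by
      refine ⟨ν + Pi.single b 1 - Pi.single a 1, funext fun i => ?_⟩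
      simp only [Pi.add_apply, Pi.sub_apply, Pi.single_apply]
      split_ifs <;> subst_vars <;> omega
    have hΦ' := sum_mul_add_of_transfer hν' (range r) (r - ·)
    have htot' := sum_mul_add_of_transfer hν' (range r) 1
    simp only [Pi.one_apply, one_mul, mem_range, show a < r by omega, hbr, if_true] at hΦ' htot'
    obtain ⟨A', hA', hrow', hcol'⟩ := exists_binary_transfer hA (ν' := ν' ∘ Fin.val) hrow
      (a := ⟨a, by omega⟩) (b := ⟨b, hbr⟩) (by simp; omega) hlt
      (by funext i; simpa [Pi.single_apply, Fin.ext_iff] using congrFun hν' i)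
    exact ih _ (by omega) ⟨A', hA', hrow', fun j => (hcol' j).trans (hcol j)⟩
      (hdom.of_transfer hν' hab hstrict) (by omega) rfl
  · push Not at hne
    exact ⟨A, hA, fun i => (hrow i).trans (hne i i.2), hcol⟩

end Dominance

end GaleRyser

theorem stmt3_general (r : ℕ) (lam mu : ℕ → ℕ)
    (hlam : Antitone lam) (hmu : Antitone mu)
    (hsz : ∑ i ∈ Finset.range r, lam i = ∑ i ∈ Finset.range r, mu i) :
    (∀ t, t ≤ r → ∑ i ∈ Finset.range t, mu i ≤ ∑ i ∈ Finset.range t, lam i) ↔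
      ∃ A : Fin r → Fin (lam 0) → ℕ, (∀ i j, A i j ≤ 1) ∧
        (∀ i, ∑ j, A i j = mu i.val) ∧
        (∀ j : Fin (lam 0), ∑ i, A i j =
          ((Finset.range r).filter fun i => (j : ℕ) < lam i).card) :=
  ⟨fun hdom => (GaleRyser.hasBinaryMatrix_young hlam).of_dominates hmu hdom hsz,
    GaleRyser.dominates_of_hasBinaryMatrix hlam⟩

/-- Gale–Ryser: for partitions `lam`, `mu` of the same number with at most `r`
parts, `lam` dominates `mu` iff there is an `r × lam 0` matrix with entries in `{0,1}` whose
`i`-th row sums to `mu i` and whose `j`-th column sums to `lam'_j`, the `j`-th part of the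
conjugate partition of `lam` (0-indexed: `lam'_j = #{i < r : j < lam i}`). -/
theorem stmt3 (r : ℕ) (lam mu : ℕ → ℕ)
    (hlam : Antitone lam) (hmu : Antitone mu)
    (hlam0 : ∀ i, r ≤ i → lam i = 0) (hmu0 : ∀ i, r ≤ i → mu i = 0)
    (hsz : ∑ i ∈ Finset.range r, lam i = ∑ i ∈ Finset.range r, mu i) :
    (∀ t, t ≤ r → ∑ i ∈ Finset.range t, mu i ≤ ∑ i ∈ Finset.range t, lam i) ↔
      ∃ A : Fin r → Fin (lam 0) → ℕ, (∀ i j, A i j ≤ 1) ∧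
        (∀ i, ∑ j, A i j = mu i.val) ∧
        (∀ j : Fin (lam 0), ∑ i, A i j =
          ((Finset.range r).filter fun i => (j : ℕ) < lam i).card) :=
  stmt3_general r lam mu hlam hmu hsz
end

section
/- Suppose A is an r × s matrix with entries in {0,1}, S is a subset of the columns of A such that the vector of row sums of the submatrix of columns in S is weakly decreasing, and the vector of row sums of the submatrix of the complementary columns is also weakly decreasing. Let μ be the row-sum vector of A, λ' the column-sum vector of A, and assume λ' is the conjugate of a partition λ with λ ≥_Dom μ. Then, letting μ• be the row sums over S, λ• the partition whose conjugate has parts {λ'_j : j ∈ S}, and (λ°, μ°) the complementary data, we have λ• ≥_Dom μ• and λ° ≥_Dom μ°, and (λ,μ) = (λ•+λ°, μ•+μ°). -/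
/-!
This is the easy direction of Gale–Ryser, applied to the submatrices on `S` and on `Sᶜ`. In a
`{0,1}`-matrix, the first `t` rows contain at most `min t (c j)` ones of column `j`, where `c j`
is its column sum; summed over the columns this is the `t`-th partial sum of the partition
conjugate to the column sums, with equality at `t = r`. The decompositions of `λ` and `μ` just
split sums over all columns into sums over `S` and `Sᶜ`.
-/

open Finset

theorem sum_range_card_filter_lt {ι : Type*} (T : Finset ι) (c : ι → ℕ) (t : ℕ) :
    ∑ i ∈ range t, #{j ∈ T | i < c j} = ∑ j ∈ T, min t (c j) := by
  calc ∑ i ∈ range t, #{j ∈ T | i < c j}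
      = ∑ j ∈ T, #{i ∈ range t | i < c j} := by
        simp only [card_filter]
        exact sum_comm
    _ = ∑ j ∈ T, min t (c j) := by
        refine sum_congr rfl fun j _ => ?_
        rw [← card_range (min t (c j))]
        congr 1
        ext i
        simp

theorem sum_le_of_le_one {r : ℕ} (a : Fin r → ℕ) (ha : ∀ i, a i ≤ 1) : ∑ i, a i ≤ r := by
  simpa using sum_le_card_nsmul univ a 1 fun i _ => ha i

theorem sum_castLE_le_min {r t : ℕ} (ht : t ≤ r) (a : Fin r → ℕ) (ha : ∀ i, a i ≤ 1) :
    ∑ i : Fin t, a (Fin.castLE ht i) ≤ min t (∑ i, a i) := by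
  refine le_min (sum_le_of_le_one _ fun i => ha _) ?_
  exact (sum_map univ (Fin.castLEEmb ht) a).ge.trans
    (sum_le_univ_sum_of_nonneg fun _ => Nat.zero_le _)

section ZeroOneMatrix

variable {r : ℕ} {ι : Type*} (A : Fin r → ι → ℕ) (T : Finset ι) (m : ℕ → ℕ)

theorem sum_range_rowSum_le (hA : ∀ i j, A i j ≤ 1) (hm : ∀ i : Fin r, m i = ∑ j ∈ T, A i j)
    {t : ℕ} (ht : t ≤ r) : ∑ i ∈ range t, m i ≤ ∑ j ∈ T, min t (∑ x, A x j) :=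
  calc ∑ i ∈ range t, m i = ∑ i : Fin t, ∑ j ∈ T, A (Fin.castLE ht i) j := by
        rw [← Fin.sum_univ_eq_sum_range]
        exact sum_congr rfl fun i _ => hm (Fin.castLE ht i)
    _ = ∑ j ∈ T, ∑ i : Fin t, A (Fin.castLE ht i) j := sum_comm
    _ ≤ ∑ j ∈ T, min t (∑ x, A x j) :=
        sum_le_sum fun j _ => sum_castLE_le_min ht (A · j) (hA · j)

theorem sum_range_rowSum_eq (hm : ∀ i : Fin r, m i = ∑ j ∈ T, A i j) :
    ∑ i ∈ range r, m i = ∑ j ∈ T, ∑ x, A x j := by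
  rw [← Fin.sum_univ_eq_sum_range]
  simp only [hm]
  exact sum_comm

theorem dominates_rowSum_of_zero_one (hA : ∀ i j, A i j ≤ 1)
    (hm : ∀ i : Fin r, m i = ∑ j ∈ T, A i j) (lam : ℕ → ℕ)
    (hlam : ∀ i, lam i = #{j ∈ T | i < ∑ x, A x j}) :
    (∀ t, t ≤ r → ∑ i ∈ range t, m i ≤ ∑ i ∈ range t, lam i) ∧
      ∑ i ∈ range r, lam i = ∑ i ∈ range r, m i := by
  have hconj : ∀ t, ∑ i ∈ range t, lam i = ∑ j ∈ T, min t (∑ x, A x j) := fun t => by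
    simp only [hlam]
    exact sum_range_card_filter_lt T _ t
  refine ⟨fun t ht => hconj t ▸ sum_range_rowSum_le A T m hA hm ht, ?_⟩
  rw [hconj, sum_range_rowSum_eq A T m hm]
  exact sum_congr rfl fun j _ => min_eq_right (sum_le_of_le_one (A · j) (hA · j))

end ZeroOneMatrix

theorem stmt5_general (r s : ℕ) (A : Fin r → Fin s → ℕ) (hA : ∀ i j, A i j ≤ 1)
    (S : Finset (Fin s))
    (mu muS muC lam lamS lamC : ℕ → ℕ)
    (hmu : ∀ i : Fin r, mu i.val = ∑ j, A i j) (hmu0 : ∀ i, r ≤ i → mu i = 0)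
    (hmuS : ∀ i : Fin r, muS i.val = ∑ j ∈ S, A i j) (hmuS0 : ∀ i, r ≤ i → muS i = 0)
    (hmuC : ∀ i : Fin r, muC i.val = ∑ j ∈ Sᶜ, A i j) (hmuC0 : ∀ i, r ≤ i → muC i = 0)
    (hlam : ∀ i, lam i = ((Finset.univ : Finset (Fin s)).filter fun j => i < ∑ x, A x j).card)
    (hlamS : ∀ i, lamS i = (S.filter fun j => i < ∑ x, A x j).card)
    (hlamC : ∀ i, lamC i = (Sᶜ.filter fun j => i < ∑ x, A x j).card) :
    (∀ t, t ≤ r → ∑ i ∈ Finset.range t, muS i ≤ ∑ i ∈ Finset.range t, lamS i) ∧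
    (∑ i ∈ Finset.range r, lamS i = ∑ i ∈ Finset.range r, muS i) ∧
    (∀ t, t ≤ r → ∑ i ∈ Finset.range t, muC i ≤ ∑ i ∈ Finset.range t, lamC i) ∧
    (∑ i ∈ Finset.range r, lamC i = ∑ i ∈ Finset.range r, muC i) ∧
    (∀ i, lam i = lamS i + lamC i) ∧ (∀ i, mu i = muS i + muC i) := by
  obtain ⟨hdomS, hsumS⟩ := dominates_rowSum_of_zero_one A S muS hA hmuS lamS hlamS
  obtain ⟨hdomC, hsumC⟩ := dominates_rowSum_of_zero_one A Sᶜ muC hA hmuC lamC hlamC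
  refine ⟨hdomS, hsumS, hdomC, hsumC, fun i => ?_, fun i => ?_⟩
  · simp only [hlam, hlamS, hlamC, card_filter, sum_add_sum_compl]
  · rcases lt_or_ge i r with hi | hi
    · rw [← Fin.val_mk hi, hmu, hmuS, hmuC, sum_add_sum_compl]
    · rw [hmu0 i hi, hmuS0 i hi, hmuC0 i hi]

/-- splitting the columns of a `{0,1}`-matrix into two groups, each with weakly
decreasing row-sum vector, yields a decomposition in the Kostka semigroup. Here
`mu` is the row-sum vector of `A`, the column sums of `A` are weakly decreasing (so they
form the conjugate `lam'` of the partition `lam`, where `lam i = #{j : i < colsum j}`), and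
`lam` dominates `mu`. `muS`/`muC` are the row sums over `S` and its complement, and
`lamS`/`lamC` are the partitions whose conjugates have parts the column sums over `S` and
its complement. -/
theorem stmt5 (r s : ℕ) (A : Fin r → Fin s → ℕ) (hA : ∀ i j, A i j ≤ 1)
    (S : Finset (Fin s))
    (mu muS muC lam lamS lamC : ℕ → ℕ)
    (hmu : ∀ i : Fin r, mu i.val = ∑ j, A i j) (hmu0 : ∀ i, r ≤ i → mu i = 0)
    (hmuS : ∀ i : Fin r, muS i.val = ∑ j ∈ S, A i j) (hmuS0 : ∀ i, r ≤ i → muS i = 0)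
    (hmuC : ∀ i : Fin r, muC i.val = ∑ j ∈ Sᶜ, A i j) (hmuC0 : ∀ i, r ≤ i → muC i = 0)
    (hSdec : Antitone muS) (hCdec : Antitone muC)
    (hcolsorted : ∀ j k : Fin s, j ≤ k → ∑ i, A i k ≤ ∑ i, A i j)
    (hlam : ∀ i, lam i = ((Finset.univ : Finset (Fin s)).filter fun j => i < ∑ x, A x j).card)
    (hlamS : ∀ i, lamS i = (S.filter fun j => i < ∑ x, A x j).card)
    (hlamC : ∀ i, lamC i = (Sᶜ.filter fun j => i < ∑ x, A x j).card)
    (hdom : ∀ t, t ≤ r → ∑ i ∈ Finset.range t, mu i ≤ ∑ i ∈ Finset.range t, lam i) :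
    (∀ t, t ≤ r → ∑ i ∈ Finset.range t, muS i ≤ ∑ i ∈ Finset.range t, lamS i) ∧
    (∑ i ∈ Finset.range r, lamS i = ∑ i ∈ Finset.range r, muS i) ∧
    (∀ t, t ≤ r → ∑ i ∈ Finset.range t, muC i ≤ ∑ i ∈ Finset.range t, lamC i) ∧
    (∑ i ∈ Finset.range r, lamC i = ∑ i ∈ Finset.range r, muC i) ∧
    (∀ i, lam i = lamS i + lamC i) ∧ (∀ i, mu i = muS i + muC i) :=
  stmt5_general r s A hA S mu muS muC lam lamS lamC hmu hmu0 hmuS hmuS0 hmuC hmuC0 hlam hlamS hlamC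
end

section
/- Let a, b, ℓ be integers with r ≥ a+ℓ ≥ a ≥ b > 0. Then the pair (λ, μ) with λ = (a repeated b+ℓ times, then zeros) and μ = (a repeated ℓ times, then b repeated a times, then zeros), as an element of the Kostka cone Kostka_r, is extremal: whenever (λ,μ) = (λ¹,μ¹) + (λ²,μ²) with both summands in Kostka_r, the two summands are parallel (each is a nonnegative scalar multiple of (λ,μ)). -/
/-!
A summand `(λ¹, μ¹)` of `(λ, μ)` inherits its block structure: where two weakly decreasing
sequences add up to a constant, each of them is constant, and where nonnegative ones add up to
zero, both vanish. So `λ¹ = (x^{b+ℓ})` and `μ¹ = (y^ℓ, z^a)`. The dominance inequality at `t = ℓ`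
is an equality for `(λ, μ)`, hence for both summands, which forces `y = x`; equality of the total
sums gives `a z = b x`. Therefore `(λ¹, μ¹) = (x / a) • (λ, μ)`.
-/

/-- Membership in the Kostka cone `Kostka_r ⊆ ℝ^{2r}`. -/
def InKostkaCone (r : ℕ) (lam mu : Fin r → ℝ) : Prop :=
  (∀ i j : Fin r, i ≤ j → lam j ≤ lam i) ∧
  (∀ i j : Fin r, i ≤ j → mu j ≤ mu i) ∧
  (∀ i, 0 ≤ lam i) ∧ (∀ i, 0 ≤ mu i) ∧
  (∀ t, 1 ≤ t → t ≤ r - 1 →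
    (∑ i : Fin r, if (i : ℕ) < t then mu i else 0) ≤
      ∑ i : Fin r, if (i : ℕ) < t then lam i else 0) ∧
  (∑ i, lam i = ∑ i, mu i)

open Finset

theorem Antitone.eq_of_add_eq_add {α β : Type*} [Preorder α] [AddCommMonoid β] [PartialOrder β]
    [IsOrderedCancelAddMonoid β] {f g : α → β} (hf : Antitone f) (hg : Antitone g) {i j : α}
    (hij : i ≤ j) (h : f i + g i = f j + g j) : f j = f i :=
  (hf hij).antisymm <| le_of_add_le_add_right <| h.le.trans <| add_le_add_right (hg hij) _

theorem Fin.sum_ite_val_lt {M : Type*} [AddCommMonoid M] (r k : ℕ) (c : M) :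
    (∑ i : Fin r, if (i : ℕ) < k then c else 0) = min r k • c := by
  rw [sum_ite, sum_const_zero, add_zero, Finset.sum_const, Fin.card_filter_val_lt]

theorem Fin.sum_ite_val_lt_of_eq {M : Type*} [AddCommMonoid M] {r k : ℕ} {v : Fin r → M} {c : M}
    (hv : ∀ i : Fin r, (i : ℕ) < k → v i = c) :
    (∑ i : Fin r, if (i : ℕ) < k then v i else 0) = min r k • c := by
  rw [← Fin.sum_ite_val_lt]
  exact sum_congr rfl fun i _ => by split_ifs with hi; exacts [hv i hi, rfl]

theorem Fin.sum_ite_val_lt_add_of_eq {M : Type*} [AddCommMonoid M] {r k : ℕ} {u v : Fin r → M}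
    {c : M} (huv : ∀ i : Fin r, (i : ℕ) < k → u i + v i = c) :
    ((∑ i : Fin r, if (i : ℕ) < k then u i else 0) +
      ∑ i : Fin r, if (i : ℕ) < k then v i else 0) = min r k • c := by
  rw [← sum_add_distrib]; simp_rw [ite_add_ite, add_zero]
  exact Fin.sum_ite_val_lt_of_eq huv

section AntitoneSummand

variable {r : ℕ} {f g : Fin r → ℝ}

theorem eq_ite_of_add_eq_ite (hf : Antitone f) (hg : Antitone g) (hf0 : 0 ≤ f) (hg0 : 0 ≤ g)
    {k : ℕ} {c : ℝ} (hfg : ∀ i, f i + g i = if (i : ℕ) < k then c else 0)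
    {i₀ : Fin r} (hi₀ : (i₀ : ℕ) = 0) (i : Fin r) :
    f i = if (i : ℕ) < k then f i₀ else 0 := by
  split_ifs with hi
  · exact hf.eq_of_add_eq_add hg (Fin.le_def.2 (by omega))
      (by rw [hfg, hfg, if_pos hi, if_pos (by omega)])
  · exact ((add_eq_zero_iff_of_nonneg (hf0 i) (hg0 i)).1 (by rw [hfg, if_neg hi])).1

theorem eq_ite_ite_of_add_eq_ite_ite (hf : Antitone f) (hg : Antitone g) (hf0 : 0 ≤ f)
    (hg0 : 0 ≤ g) {p q : ℕ} {c d : ℝ}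
    (hfg : ∀ i, f i + g i = if (i : ℕ) < p then c else if (i : ℕ) < q then d else 0)
    {i₀ iₚ : Fin r} (hi₀ : (i₀ : ℕ) = 0) (hiₚ : (iₚ : ℕ) = p) (i : Fin r) :
    f i = if (i : ℕ) < p then f i₀ else if (i : ℕ) < q then f iₚ else 0 := by
  split_ifs with hp hq
  · exact hf.eq_of_add_eq_add hg (Fin.le_def.2 (by omega))
      (by rw [hfg, hfg, if_pos hp, if_pos (by omega)])
  · exact hf.eq_of_add_eq_add hg (Fin.le_def.2 (by omega))
      (by rw [hfg, hfg, if_neg hp, if_pos hq, if_neg (by omega), if_pos (by omega)])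
  · exact ((add_eq_zero_iff_of_nonneg (hf0 i) (hg0 i)).1 (by rw [hfg, if_neg hp, if_neg hq])).1

end AntitoneSummand

theorem exists_blocks_of_summand {r a b ℓ : ℕ} {lam mu l1 m1 l2 m2 : Fin r → ℝ}
    (hb : 0 < b) (hba : b ≤ a) (har : a + ℓ ≤ r)
    (hlam : ∀ i : Fin r, lam i = if (i : ℕ) < b + ℓ then (a : ℝ) else 0)
    (hmu : ∀ i : Fin r, mu i =
      if (i : ℕ) < ℓ then (a : ℝ) else if (i : ℕ) < ℓ + a then (b : ℝ) else 0)
    (h1 : InKostkaCone r l1 m1) (h2 : InKostkaCone r l2 m2)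
    (hl : lam = l1 + l2) (hm : mu = m1 + m2) :
    ∃ x z : ℝ, 0 ≤ x ∧ (∀ i : Fin r, l1 i = if (i : ℕ) < b + ℓ then x else 0) ∧
      ∀ i : Fin r, m1 i = if (i : ℕ) < ℓ then x else if (i : ℕ) < ℓ + a then z else 0 := by
  obtain ⟨hl1_anti, hm1_anti, hl1_nonneg, hm1_nonneg, hdom1, -⟩ := h1
  obtain ⟨hl2_anti, hm2_anti, hl2_nonneg, hm2_nonneg, hdom2, -⟩ := h2
  have hl_apply (i : Fin r) : l1 i + l2 i = lam i := (congrFun hl i).symm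
  have hm_apply (i : Fin r) : m1 i + m2 i = mu i := (congrFun hm i).symm
  obtain ⟨i₀, hi₀⟩ : ∃ i : Fin r, (i : ℕ) = 0 := ⟨⟨0, by omega⟩, rfl⟩
  obtain ⟨iℓ, hiℓ⟩ : ∃ i : Fin r, (i : ℕ) = ℓ := ⟨⟨ℓ, by omega⟩, rfl⟩
  have hl1 := eq_ite_of_add_eq_ite hl1_anti hl2_anti hl1_nonneg hl2_nonneg
    (fun i => (hl_apply i).trans (hlam i)) hi₀
  have hm1 := eq_ite_ite_of_add_eq_ite_ite hm1_anti hm2_anti hm1_nonneg hm2_nonneg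
    (fun i => (hm_apply i).trans (hmu i)) hi₀ hiℓ
  suffices hyx : 0 < ℓ → m1 i₀ = l1 i₀ from ⟨l1 i₀, m1 iℓ, hl1_nonneg i₀, hl1, fun i => by
    rw [hm1]; split_ifs with hi <;> [rw [hyx (by omega)]; rfl; rfl]⟩
  intro hℓ
  -- `(λ, μ)` has equal partial sums at `t = ℓ`, so both dominance inequalities there are tight.
  have htight : (∑ i : Fin r, if (i : ℕ) < ℓ then m1 i else 0) =
      ∑ i : Fin r, if (i : ℕ) < ℓ then l1 i else 0 := by
    have hmu_part := Fin.sum_ite_val_lt_add_of_eq (k := ℓ) fun i hi =>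
      (hm_apply i).trans ((hmu i).trans (if_pos hi))
    have hlam_part := Fin.sum_ite_val_lt_add_of_eq (k := ℓ) fun i hi =>
      (hl_apply i).trans ((hlam i).trans (if_pos (by omega)))
    linarith [hdom1 ℓ hℓ (by omega), hdom2 ℓ hℓ (by omega)]
  rw [Fin.sum_ite_val_lt_of_eq fun i hi => (hm1 i).trans (if_pos hi),
    Fin.sum_ite_val_lt_of_eq fun i hi => (hl1 i).trans (if_pos (by omega))] at htight
  exact smul_right_injective ℝ (by omega) htight

theorem summand_eq_smul {r a b ℓ : ℕ} {lam mu l1 m1 l2 m2 : Fin r → ℝ}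
    (hb : 0 < b) (hba : b ≤ a) (har : a + ℓ ≤ r)
    (hlam : ∀ i : Fin r, lam i = if (i : ℕ) < b + ℓ then (a : ℝ) else 0)
    (hmu : ∀ i : Fin r, mu i =
      if (i : ℕ) < ℓ then (a : ℝ) else if (i : ℕ) < ℓ + a then (b : ℝ) else 0)
    (h1 : InKostkaCone r l1 m1) (h2 : InKostkaCone r l2 m2)
    (hl : lam = l1 + l2) (hm : mu = m1 + m2) :
    ∃ c : ℝ, 0 ≤ c ∧ l1 = c • lam ∧ m1 = c • mu := by
  obtain ⟨x, z, hx0, hl1, hm1⟩ := exists_blocks_of_summand hb hba har hlam hmu h1 h2 hl hm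
  have hxz : (a : ℝ) * z = b * x := by
    obtain ⟨-, -, -, -, -, hsum⟩ := h1
    have hsplit (i : Fin r) :
        m1 i = (if (i : ℕ) < ℓ then x - z else 0) + if (i : ℕ) < ℓ + a then z else 0 := by
      rw [hm1]; split_ifs <;> first | omega | ring
    simp only [hl1, hsplit, sum_add_distrib, Fin.sum_ite_val_lt, min_eq_right (by omega : b + ℓ ≤ r),
      min_eq_right (by omega : ℓ ≤ r), min_eq_right (by omega : ℓ + a ≤ r), nsmul_eq_mul,
      Nat.cast_add] at hsum
    linear_combination -hsum
  have ha : (0 : ℝ) < a := by exact_mod_cast (by omega : 0 < a)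
  have hx : x / a * a = x := div_mul_cancel₀ x ha.ne'
  have hz : x / a * b = z := by
    rw [div_mul_eq_mul_div, div_eq_iff ha.ne']; linear_combination -hxz
  refine ⟨x / a, div_nonneg hx0 ha.le, funext fun i => ?_, funext fun i => ?_⟩
  · rw [hl1, Pi.smul_apply, hlam, smul_eq_mul, mul_ite, mul_zero, hx]
  · rw [hm1, Pi.smul_apply, hmu, smul_eq_mul, mul_ite, mul_ite, mul_zero, hx, hz]

/-- for integers `r ≥ a + ℓ ≥ a ≥ b > 0`, the pair
`(a^{b+ℓ}, a^ℓ b^a)` is extremal in the Kostka cone: any decomposition into two cone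
elements has both summands nonnegative multiples of it. -/
theorem stmt6 (r a b ℓ : ℕ) (hb : 0 < b) (hba : b ≤ a) (har : a + ℓ ≤ r)
    (lam mu : Fin r → ℝ)
    (hlam : ∀ i : Fin r, lam i = if (i : ℕ) < b + ℓ then (a : ℝ) else 0)
    (hmu : ∀ i : Fin r, mu i =
      if (i : ℕ) < ℓ then (a : ℝ) else if (i : ℕ) < ℓ + a then (b : ℝ) else 0) :
    ∀ l1 m1 l2 m2 : Fin r → ℝ, InKostkaCone r l1 m1 → InKostkaCone r l2 m2 →
      lam = l1 + l2 → mu = m1 + m2 →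
      (∃ c : ℝ, 0 ≤ c ∧ l1 = c • lam ∧ m1 = c • mu) ∧
      (∃ c : ℝ, 0 ≤ c ∧ l2 = c • lam ∧ m2 = c • mu) := by
  intro l1 m1 l2 m2 h1 h2 hl hm
  exact ⟨summand_eq_smul hb hba har hlam hmu h1 h2 hl hm,
    summand_eq_smul hb hba har hlam hmu h2 h1 (hl.trans (add_comm _ _)) (hm.trans (add_comm _ _))⟩
end

section
/- If (λ,μ) lies on an extremal ray of the Kostka cone Kostka_r and all dominance inequalities Σ_{i≤t} λ_i ≥ Σ_{i≤t} μ_i are strict for 1 ≤ t < r, then (λ,μ) is a positive real multiple of (a^b, b^a) for suitable integers r ≥ a ≥ b > 0, where a is the number of nonzero parts of μ, b the number of nonzero parts of λ, and a^b denotes the rectangular partition with b parts equal to a. -/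
open Filter Topology Finset

lemma Fin.mem_iff_lt_card_of_isLowerSet {r : ℕ} {S : Finset (Fin r)}
    (hS : IsLowerSet (S : Set (Fin r))) (i : Fin r) : i ∈ S ↔ (i : ℕ) < #S := by
  constructor
  · intro hi
    have := card_le_card fun j hj => hS (mem_Iic.mp hj) hi
    rw [Fin.card_Iic] at this
    omega
  · intro hi
    by_contra hni
    have := card_le_card fun j hj => mem_Iio.mpr <| lt_of_not_ge fun hij => hni (hS hij hj)
    rw [Fin.card_Iio] at this
    omega

lemma Antitone.ne_zero_iff_lt_card {r : ℕ} {f : Fin r → ℝ} (hf : Antitone f)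
    (hf0 : ∀ i, 0 ≤ f i) (i : Fin r) : f i ≠ 0 ↔ (i : ℕ) < #{j | f j ≠ 0} := by
  rw [← Fin.mem_iff_lt_card_of_isLowerSet, mem_filter, and_iff_right (mem_univ _)]
  intro j k hkj hj
  simp only [coe_filter, mem_univ, true_and, Set.mem_ofPred_eq] at hj ⊢
  exact ((hf0 j).lt_of_ne' hj |>.trans_le (hf hkj)).ne'

lemma eq_of_sq_eq_smul {ι : Type*} {f : ι → ℝ} {d : ℝ} (h : f ^ 2 = d • f) {i : ι}
    (hi : f i ≠ 0) : f i = d :=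
  mul_left_cancel₀ hi <| by simpa [sq, mul_comm] using congrFun h i

lemma Antitone.eq_ite_lt_card {r : ℕ} {f : Fin r → ℝ} {d : ℝ} (hf : Antitone f)
    (hf0 : ∀ i, 0 ≤ f i) (hd : ∀ i, f i ≠ 0 → f i = d) (i : Fin r) :
    f i = if (i : ℕ) < #{j | f j ≠ 0} then d else 0 := by
  split_ifs with hi
  · exact hd i ((hf.ne_zero_iff_lt_card hf0 i).mpr hi)
  · exact not_not.mp (mt (hf.ne_zero_iff_lt_card hf0 i).mp hi)

lemma sum_eq_card_ne_zero_mul {ι : Type*} [Fintype ι] {f : ι → ℝ} {d : ℝ}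
    (hf : ∀ i, f i ≠ 0 → f i = d) : ∑ i, f i = #{i | f i ≠ 0} * d := by
  rw [← sum_filter_ne_zero, ← nsmul_eq_mul, ← sum_const]
  exact sum_congr rfl fun i hi => hf i (mem_filter.mp hi).2

def partialSum {r : ℕ} (f : Fin r → ℝ) (t : ℕ) : ℝ :=
  ∑ i : Fin r, if (i : ℕ) < t then f i else 0

def StrictlyDominates {r : ℕ} (lam mu : Fin r → ℝ) : Prop :=
  ∀ t, 1 ≤ t → t < r → partialSum mu t < partialSum lam t

lemma partialSum_add {r : ℕ} (f g : Fin r → ℝ) (t : ℕ) :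
    partialSum (f + g) t = partialSum f t + partialSum g t := by
  simp [partialSum, ← sum_add_distrib, ite_add_ite]

lemma partialSum_smul {r : ℕ} (c : ℝ) (f : Fin r → ℝ) (t : ℕ) :
    partialSum (c • f) t = c * partialSum f t := by
  simp [partialSum, mul_sum, mul_ite]

lemma partialSum_le_sum {r : ℕ} (t : ℕ) {f : Fin r → ℝ} (hf : ∀ i, 0 ≤ f i) :
    partialSum f t ≤ ∑ i, f i :=
  sum_le_sum fun i _ => by split_ifs <;> simp [hf i]

lemma partialSum_eq_sum {r : ℕ} {t : ℕ} {f : Fin r → ℝ} (hf : ∀ i : Fin r, t ≤ i → f i = 0) :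
    partialSum f t = ∑ i, f i :=
  sum_congr rfl fun i _ => by split_ifs with h; exacts [rfl, (hf i (not_lt.mp h)).symm]

lemma eventually_add_mul_le_add_mul {a b x y : ℝ} (hab : a ≤ b) (hxy : a = b → x = y) :
    ∀ᶠ s in 𝓝 (0 : ℝ), a + s * x ≤ b + s * y := by
  rcases hab.lt_or_eq with hlt | rfl
  · refine (ContinuousAt.eventually_lt (by fun_prop) (by fun_prop) ?_).mono fun _ h => h.le
    simpa using hlt
  · simp [hxy rfl]

lemma InKostkaCone.smul {r : ℕ} {lam mu : Fin r → ℝ} (h : InKostkaCone r lam mu) {c : ℝ}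
    (hc : 0 ≤ c) : InKostkaCone r (c • lam) (c • mu) := by
  obtain ⟨hlam, hmu, hlam0, hmu0, hdom, hsum⟩ := h
  refine ⟨fun i j hij => ?_, fun i j hij => ?_, fun i => ?_, fun i => ?_, fun t ht1 ht2 => ?_, ?_⟩
  · exact mul_le_mul_of_nonneg_left (hlam i j hij) hc
  · exact mul_le_mul_of_nonneg_left (hmu i j hij) hc
  · exact mul_nonneg hc (hlam0 i)
  · exact mul_nonneg hc (hmu0 i)
  · change partialSum (c • mu) t ≤ partialSum (c • lam) t
    rw [partialSum_smul, partialSum_smul]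
    exact mul_le_mul_of_nonneg_left (hdom t ht1 ht2) hc
  · simp only [Pi.smul_apply, smul_eq_mul, ← mul_sum, hsum]

lemma InKostkaCone.eventually_add_smul {r : ℕ} {lam mu w w' : Fin r → ℝ}
    (hK : InKostkaCone r lam mu)
    (hstrict : StrictlyDominates lam mu)
    (hw : ∀ i j, lam i = lam j → w i = w j) (hw0 : ∀ i, lam i = 0 → w i = 0)
    (hw' : ∀ i j, mu i = mu j → w' i = w' j) (hw'0 : ∀ i, mu i = 0 → w' i = 0)
    (hsum : ∑ i, w i = ∑ i, w' i) :
    ∀ᶠ s in 𝓝 (0 : ℝ), InKostkaCone r (lam + s • w) (mu + s • w') := by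
  obtain ⟨hlam, hmu, hlam0, hmu0, -, hsum₀⟩ := hK
  have hanti {f v : Fin r → ℝ} (hf : Antitone f) (hv : ∀ i j, f i = f j → v i = v j) :
      ∀ᶠ s in 𝓝 (0 : ℝ), ∀ i j, i ≤ j → (f + s • v) j ≤ (f + s • v) i := by
    simp only [eventually_all]
    exact fun i j hij => eventually_add_mul_le_add_mul (hf hij) (hv j i)
  have hnonneg {f v : Fin r → ℝ} (hf : ∀ i, 0 ≤ f i) (hv : ∀ i, f i = 0 → v i = 0) :
      ∀ᶠ s in 𝓝 (0 : ℝ), ∀ i, 0 ≤ (f + s • v) i := by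
    refine eventually_all.mpr fun i => ?_
    simpa using eventually_add_mul_le_add_mul (hf i) (x := 0) fun h => (hv i h.symm).symm
  have hdom : ∀ᶠ s in 𝓝 (0 : ℝ), ∀ t ∈ Icc 1 (r - 1),
      partialSum (mu + s • w') t ≤ partialSum (lam + s • w) t := by
    refine (eventually_all_finset _).mpr fun t ht => ?_
    obtain ⟨ht1, ht2⟩ := mem_Icc.mp ht
    have hlt := hstrict t ht1 (by omega)
    simpa only [partialSum_add, partialSum_smul] using eventually_add_mul_le_add_mul hlt.le
      fun h => absurd h hlt.ne
  filter_upwards [hanti hlam hw, hanti hmu hw', hnonneg hlam0 hw0, hnonneg hmu0 hw'0, hdom]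
    with s h1 h2 h3 h4 h5
  refine ⟨h1, h2, h3, h4, fun t ht1 ht2 => h5 t (mem_Icc.mpr ⟨ht1, ht2⟩), ?_⟩
  simp only [Pi.add_apply, Pi.smul_apply, smul_eq_mul, sum_add_distrib, ← mul_sum, hsum₀, hsum]

def IsKostkaExtremal (r : ℕ) (lam mu : Fin r → ℝ) : Prop :=
  ∀ l1 m1 l2 m2 : Fin r → ℝ, InKostkaCone r l1 m1 → InKostkaCone r l2 m2 →
    lam = l1 + l2 → mu = m1 + m2 →
    (∃ c : ℝ, 0 ≤ c ∧ l1 = c • lam ∧ m1 = c • mu) ∧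
    (∃ c : ℝ, 0 ≤ c ∧ l2 = c • lam ∧ m2 = c • mu)

lemma IsKostkaExtremal.exists_smul_of_add_smul {r : ℕ} {lam mu w w' : Fin r → ℝ}
    (hext : IsKostkaExtremal r lam mu) {ε : ℝ} (hε : ε ≠ 0)
    (hp : InKostkaCone r (lam + ε • w) (mu + ε • w'))
    (hm : InKostkaCone r (lam + (-ε) • w) (mu + (-ε) • w')) :
    ∃ d : ℝ, w = d • lam ∧ w' = d • mu := by
  obtain ⟨⟨c, -, hl, hm⟩, -⟩ := hext _ _ _ _ (hp.smul (c := 1 / 2) (by norm_num))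
    (hm.smul (c := 1 / 2) (by norm_num)) (by module) (by module)
  refine ⟨(2 * c - 1) / ε, funext fun i => ?_, funext fun i => ?_⟩
  · have := congrFun hl i
    simp only [Pi.add_apply, Pi.smul_apply, smul_eq_mul] at this ⊢
    field_simp
    linarith
  · have := congrFun hm i
    simp only [Pi.add_apply, Pi.smul_apply, smul_eq_mul] at this ⊢
    field_simp
    linarith

lemma IsKostkaExtremal.exists_smul_of_tangent {r : ℕ} {lam mu w w' : Fin r → ℝ}
    (hext : IsKostkaExtremal r lam mu) (hK : InKostkaCone r lam mu)
    (hstrict : StrictlyDominates lam mu)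
    (hw : ∀ i j, lam i = lam j → w i = w j) (hw0 : ∀ i, lam i = 0 → w i = 0)
    (hw' : ∀ i j, mu i = mu j → w' i = w' j) (hw'0 : ∀ i, mu i = 0 → w' i = 0)
    (hsum : ∑ i, w i = ∑ i, w' i) :
    ∃ d : ℝ, w = d • lam ∧ w' = d • mu := by
  have h := hK.eventually_add_smul hstrict hw hw0 hw' hw'0 hsum
  have hneg := (continuous_neg.tendsto' (0 : ℝ) 0 neg_zero).eventually h
  obtain ⟨ε, ⟨hp, hm⟩, hε⟩ :=
    ((h.and hneg).filter_mono nhdsWithin_le_nhds |>.and self_mem_nhdsWithin).exists (f := 𝓝[≠] 0)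
  exact hext.exists_smul_of_add_smul hε hp hm

lemma IsKostkaExtremal.exists_sq_eq_smul {r : ℕ} {lam mu : Fin r → ℝ}
    (hext : IsKostkaExtremal r lam mu) (hK : InKostkaCone r lam mu)
    (hstrict : StrictlyDominates lam mu)
    (hpos : 0 < ∑ i, lam i) :
    (∃ c : ℝ, lam ^ 2 = c • lam) ∧ ∃ e : ℝ, mu ^ 2 = e • mu := by
  have hpos' : 0 < ∑ i, mu i := hK.2.2.2.2.2 ▸ hpos
  constructor
  · obtain ⟨c, hc, -⟩ := hext.exists_smul_of_tangent (w := lam ^ 2)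
      (w' := ((∑ i, lam i ^ 2) / ∑ i, mu i) • mu) hK hstrict
      (fun i j h => by simp [h]) (fun i h => by simp [h]) (fun i j h => by simp [h])
      (fun i h => by simp [h]) (by simp [← mul_sum, hpos'.ne'])
    exact ⟨c, hc⟩
  · obtain ⟨e, -, he⟩ := hext.exists_smul_of_tangent
      (w := ((∑ i, mu i ^ 2) / ∑ i, lam i) • lam) (w' := mu ^ 2) hK hstrict
      (fun i j h => by simp [h]) (fun i h => by simp [h]) (fun i j h => by simp [h])
      (fun i h => by simp [h]) (by simp [← mul_sum, hpos.ne'])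
    exact ⟨e, he⟩

lemma InKostkaCone.mu_ne_zero_of_strict {r : ℕ} {lam mu : Fin r → ℝ}
    (hK : InKostkaCone r lam mu)
    (hstrict : StrictlyDominates lam mu)
    (hpos : 0 < ∑ i, lam i) (j : Fin r) : mu j ≠ 0 := by
  obtain ⟨-, hmu, hlam0, hmu0, -, hsum⟩ := hK
  intro hj
  have hvanish : ∀ i : Fin r, (j : ℕ) ≤ i → mu i = 0 :=
    fun i hji => le_antisymm (hj ▸ hmu j i hji) (hmu0 i)
  have hmu_sum : partialSum mu j = ∑ i, mu i := partialSum_eq_sum hvanish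
  rcases Nat.eq_zero_or_pos j with hj0 | hj0
  · rw [hj0] at hmu_sum
    simp only [partialSum, Nat.not_lt_zero, if_false, sum_const_zero] at hmu_sum
    linarith
  · linarith [hstrict j hj0 j.isLt, partialSum_le_sum j hlam0]

/-- if a nonzero `(lam, mu)` in the Kostka cone is extremal (every decomposition
into two cone elements has summands that are nonnegative multiples of `(lam, mu)`) and all
dominance inequalities for `1 ≤ t < r` are strict, then, with `b` the number of nonzero parts
of `lam` and `a` the number of nonzero parts of `mu`, we have `r ≥ a ≥ b > 0` and `(lam, mu)`
is a positive multiple of `(a^b, b^a)`. -/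
theorem stmt7 (r : ℕ) (lam mu : Fin r → ℝ)
    (hK : InKostkaCone r lam mu) (hne : lam ≠ 0)
    (hext : ∀ l1 m1 l2 m2 : Fin r → ℝ, InKostkaCone r l1 m1 → InKostkaCone r l2 m2 →
      lam = l1 + l2 → mu = m1 + m2 →
      (∃ c : ℝ, 0 ≤ c ∧ l1 = c • lam ∧ m1 = c • mu) ∧
      (∃ c : ℝ, 0 ≤ c ∧ l2 = c • lam ∧ m2 = c • mu))
    (hstrict : ∀ t, 1 ≤ t → t < r →
      (∑ i : Fin r, if (i : ℕ) < t then mu i else 0) <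
        ∑ i : Fin r, if (i : ℕ) < t then lam i else 0) :
    ∃ q : ℝ, 0 < q ∧
      0 < (Finset.univ.filter fun i : Fin r => lam i ≠ 0).card ∧
      (Finset.univ.filter fun i : Fin r => lam i ≠ 0).card ≤
        (Finset.univ.filter fun i : Fin r => mu i ≠ 0).card ∧
      (Finset.univ.filter fun i : Fin r => mu i ≠ 0).card ≤ r ∧
      (∀ i : Fin r, lam i =
        if (i : ℕ) < (Finset.univ.filter fun i : Fin r => lam i ≠ 0).card then
          q * ((Finset.univ.filter fun i : Fin r => mu i ≠ 0).card : ℝ) else 0) ∧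
      (∀ i : Fin r, mu i =
        if (i : ℕ) < (Finset.univ.filter fun i : Fin r => mu i ≠ 0).card then
          q * ((Finset.univ.filter fun i : Fin r => lam i ≠ 0).card : ℝ) else 0) := by
  obtain ⟨hlam, hmu, hlam0, hmu0, -, hsum⟩ := id hK
  have hpos : 0 < ∑ i, lam i := Fintype.sum_pos ((show 0 ≤ lam from hlam0).lt_of_ne' hne)
  obtain ⟨⟨c, hc⟩, ⟨e, he⟩⟩ := IsKostkaExtremal.exists_sq_eq_smul hext hK hstrict hpos
  have hlam_val (i) : lam i ≠ 0 → lam i = c := eq_of_sq_eq_smul hc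
  have hmu_val (i) : mu i ≠ 0 → mu i = e := eq_of_sq_eq_smul he
  have ha : #{i | mu i ≠ 0} = r := by
    rw [filter_true_of_mem fun i _ => hK.mu_ne_zero_of_strict hstrict hpos i, card_univ,
      Fintype.card_fin]
  have hlam_sum := sum_eq_card_ne_zero_mul hlam_val
  have hbc : (#{i | lam i ≠ 0} : ℝ) * c = r * e := by
    rw [← hlam_sum, hsum, sum_eq_card_ne_zero_mul hmu_val, ha]
  have hc0 : 0 < c := pos_of_mul_pos_right (hlam_sum ▸ hpos) (Nat.cast_nonneg _)
  have hb0 : 0 < #{i | lam i ≠ 0} := Nat.cast_pos.mp (pos_of_mul_pos_left (hlam_sum ▸ hpos) hc0.le)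
  have hb : #{i | lam i ≠ 0} ≤ r := (card_filter_le _ _).trans (card_fin r).le
  have hr0 : (0 : ℝ) < r := by exact_mod_cast hb0.trans_le hb
  refine ⟨c / r, by positivity, hb0, ha.symm ▸ hb, ha.le, fun i => ?_, fun i => ?_⟩
  · rw [Antitone.eq_ite_lt_card hlam hlam0 hlam_val i, ha]
    field_simp
  · rw [Antitone.eq_ite_lt_card hmu hmu0 hmu_val i, ha, if_pos i.isLt, if_pos i.isLt]
    field_simp
    linarith
end

section
/- Suppose (λ,μ) is in the Kostka semigroup with λ₁ = r, μ is a rectangle (all nonzero parts equal, say with columns of length s), and λ is not a rectangle. Then (λ,μ) is reducible: there exist nonzero (λ•,μ•), (λ°,μ°) in the Kostka semigroup with (λ,μ) = (λ•,μ•) + (λ°,μ°). -/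
/-- `(lam, mu)` is an element of the Kostka semigroup of rank `r`: both are partitions with
at most `r` parts (antitone, vanishing from index `r`), of equal size, with `lam`
dominating `mu`. -/
def KostkaElt (r : ℕ) (lam mu : ℕ → ℕ) : Prop :=
  Antitone lam ∧ Antitone mu ∧ (∀ i, r ≤ i → lam i = 0) ∧ (∀ i, r ≤ i → mu i = 0) ∧
  (∑ i ∈ Finset.range r, lam i = ∑ i ∈ Finset.range r, mu i) ∧
  (∀ t, t ≤ r → ∑ i ∈ Finset.range t, mu i ≤ ∑ i ∈ Finset.range t, lam i)

/-- `(lam, mu)` admits a nontrivial decomposition in the Kostka semigroup of rank `r`. -/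
def KostkaReducible (r : ℕ) (lam mu : ℕ → ℕ) : Prop :=
  ∃ l1 m1 l2 m2 : ℕ → ℕ, KostkaElt r l1 m1 ∧ KostkaElt r l2 m2 ∧
    (∀ i, lam i = l1 i + l2 i) ∧ (∀ i, mu i = m1 i + m2 i) ∧
    (∃ i, l1 i ≠ 0 ∨ m1 i ≠ 0) ∧ (∃ i, l2 i ≠ 0 ∨ m2 i ≠ 0)

open Finset

/-- Averaging: an antitone sequence's first `t` terms are at least `t/s` of the total of
the first `s` terms. -/
private lemma avg_dom (s : ℕ) (f : ℕ → ℕ) (hf : Antitone f) (t : ℕ) (ht : t ≤ s) :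
    t * ∑ i ∈ Finset.range s, f i ≤ s * ∑ i ∈ Finset.range t, f i := by
  rcases Nat.eq_zero_or_pos t with h0 | h0
  · simp [h0]
  have hsplit : ∑ i ∈ Finset.range s, f i
      = (∑ i ∈ Finset.range t, f i) + ∑ i ∈ Finset.Ico t s, f i := by
    rw [Finset.range_eq_Ico, Finset.range_eq_Ico]
    exact (Finset.sum_Ico_consecutive f (Nat.zero_le t) ht).symm
  have hB : ∑ i ∈ Finset.Ico t s, f i ≤ (s - t) * f (t - 1) := by
    have := Finset.sum_le_card_nsmul (Finset.Ico t s) f (f (t-1))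
      (fun i hi => hf (by have := (Finset.mem_Ico.mp hi).1; omega))
    simpa [Nat.card_Ico, smul_eq_mul] using this
  have hA : t * f (t - 1) ≤ ∑ i ∈ Finset.range t, f i := by
    have := Finset.card_nsmul_le_sum (Finset.range t) f (f (t-1))
      (fun i hi => hf (by have := Finset.mem_range.mp hi; omega))
    simpa [Finset.card_range, smul_eq_mul] using this
  calc t * ∑ i ∈ Finset.range s, f i
      = t * ∑ i ∈ Finset.range t, f i + t * ∑ i ∈ Finset.Ico t s, f i := by rw [hsplit]; ring
    _ ≤ t * ∑ i ∈ Finset.range t, f i + t * ((s - t) * f (t-1)) := by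
        exact Nat.add_le_add_left (Nat.mul_le_mul_left t hB) _
    _ = t * ∑ i ∈ Finset.range t, f i + (s - t) * (t * f (t-1)) := by ring
    _ ≤ t * ∑ i ∈ Finset.range t, f i + (s - t) * ∑ i ∈ Finset.range t, f i := by
        exact Nat.add_le_add_left (Nat.mul_le_mul_left _ hA) _
    _ = (t + (s - t)) * ∑ i ∈ Finset.range t, f i := by ring
    _ = s * ∑ i ∈ Finset.range t, f i := by rw [Nat.add_sub_cancel' ht]

private lemma rect_antitone (s w : ℕ) : Antitone (fun i => if i < s then w else 0 : ℕ → ℕ) := by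
  intro a b hab
  dsimp only
  split_ifs <;> omega

private lemma rect_sum (s w n : ℕ) :
    ∑ i ∈ Finset.range n, (if i < s then w else 0) = min s n * w := by
  induction n with
  | zero => simp
  | succ n ih =>
    rw [Finset.sum_range_succ, ih]
    by_cases h : n < s
    · have h1 : min s n = n := by omega
      have h2 : min s (n+1) = n+1 := by omega
      rw [if_pos h, h1, h2, Nat.succ_mul]
    · have h1 : min s n = s := by omega
      have h2 : min s (n+1) = s := by omega
      rw [if_neg h, h1, h2, Nat.add_zero]

private lemma mk_elt (r s w1 : ℕ) (hs : 0 < s) (hsr : s ≤ r) (f : ℕ → ℕ) (hf : Antitone f)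
    (hf0 : ∀ i, s ≤ i → f i = 0) (hsum : ∑ i ∈ Finset.range s, f i = s * w1) :
    KostkaElt r f (fun i => if i < s then w1 else 0) := by
  have hfr : ∀ i, r ≤ i → f i = 0 := fun i hi => hf0 i (hsr.trans hi)
  have hsum_r : ∑ i ∈ Finset.range r, f i = s * w1 := by
    rw [← hsum]
    exact (Finset.sum_subset (Finset.range_subset_range.2 hsr)
      (fun i _ hi => hf0 i (by simpa using hi))).symm
  refine ⟨hf, rect_antitone s w1, hfr, fun i hi => if_neg (by omega), ?_, ?_⟩
  · rw [hsum_r, rect_sum, min_eq_left hsr]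
  · intro t htr
    rw [rect_sum]
    rcases le_or_gt t s with hts | hts
    · rw [min_eq_right hts]
      have h := avg_dom s f hf t hts
      rw [hsum] at h
      have h2 : s * (t * w1) ≤ s * ∑ i ∈ Finset.range t, f i := by
        calc s * (t * w1) = t * (s * w1) := by ring
          _ ≤ _ := h
      exact Nat.le_of_mul_le_mul_left h2 hs
    · rw [min_eq_left hts.le]
      calc s * w1 = ∑ i ∈ Finset.range s, f i := hsum.symm
        _ ≤ ∑ i ∈ Finset.range t, f i :=
            Finset.sum_le_sum_of_subset (Finset.range_subset_range.2 hts.le)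

/-- Zero-sum subset existence. -/
private lemma exists_zero_subset (s r : ℕ) (hs : 0 < s) (hsr : s ≤ r) (cl : ℕ → ℕ)
    (hdvd : s ∣ ∑ j ∈ Finset.range r, cl j)
    (hcase : s < r ∨ (r = s ∧ ∃ j₀, j₀ + 1 < s ∧ cl (j₀ + 1) < cl j₀ ∧ cl j₀ - cl (j₀ + 1) < s)) :
    ∃ S : Finset ℕ, S ⊆ Finset.range r ∧ S.Nonempty ∧ S ≠ Finset.range r ∧
      s ∣ ∑ j ∈ S, cl j := by
  classical
  have castdvd : ∀ T : Finset ℕ, (∑ j ∈ T, (cl j : ZMod s)) = 0 → s ∣ ∑ j ∈ T, cl j := by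
    intro T hT
    have h2 : ((∑ j ∈ T, cl j : ℕ) : ZMod s) = 0 := by push_cast; exact hT
    exact (ZMod.natCast_eq_zero_iff _ s).mp h2
  have pairCase : ∀ a b : ℕ, a < b → b ≤ s → (0 < a ∨ b < r) →
      (∑ j ∈ Finset.range a, (cl j : ZMod s)) = (∑ j ∈ Finset.range b, (cl j : ZMod s)) →
      ∃ S : Finset ℕ, S ⊆ Finset.range r ∧ S.Nonempty ∧ S ≠ Finset.range r ∧
        s ∣ ∑ j ∈ S, cl j := by
    intro a b hab hbs hor hP
    refine ⟨Finset.Ico a b,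
      fun j hj => Finset.mem_range.mpr (by have := (Finset.mem_Ico.mp hj).2; omega),
      ⟨a, Finset.mem_Ico.mpr ⟨le_rfl, hab⟩⟩, ?_, ?_⟩
    · intro hEq
      rcases hor with h | h
      · have h0 : (0:ℕ) ∈ Finset.range r := Finset.mem_range.mpr (by omega)
        rw [← hEq, Finset.mem_Ico] at h0; omega
      · have h0 : b ∈ Finset.range r := Finset.mem_range.mpr h
        rw [← hEq, Finset.mem_Ico] at h0; omega
    · apply castdvd
      rw [Finset.sum_Ico_eq_sub _ hab.le, hP, sub_self]
  haveI : NeZero s := ⟨hs.ne'⟩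
  rcases hcase with hlt | ⟨hrs, j₀, hj₀s, hlt, hdiff⟩
  · have hcard : Fintype.card (ZMod s) < Fintype.card (Fin (s+1)) := by
      rw [ZMod.card, Fintype.card_fin]; omega
    obtain ⟨a, b, hne, heq⟩ := Fintype.exists_ne_map_eq_of_card_lt
      (fun t : Fin (s+1) => ∑ j ∈ Finset.range t.val, (cl j : ZMod s)) hcard
    have ha := a.isLt
    have hb := b.isLt
    have hne' : a.val ≠ b.val := fun h => hne (Fin.ext h)
    rcases lt_or_gt_of_ne hne' with h | h
    · exact pairCase a.val b.val h (by omega) (Or.inr (by omega)) heq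
    · exact pairCase b.val a.val h (by omega) (Or.inr (by omega)) heq.symm
  · have hrs' : s = r := hrs.symm
    subst hrs'
    by_cases hpair : ∃ a b : ℕ, a < b ∧ b ≤ s ∧ (0 < a ∨ b < s) ∧
        (∑ j ∈ Finset.range a, (cl j : ZMod s)) = (∑ j ∈ Finset.range b, (cl j : ZMod s))
    · obtain ⟨a, b, h1, h2, h3, h4⟩ := hpair
      exact pairCase a b h1 h2 h3 h4
    push_neg at hpair
    have hinj : Function.Injective
        (fun t : Fin s => ∑ j ∈ Finset.range t.val, (cl j : ZMod s)) := by
      intro t1 t2 h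
      by_contra hne
      have hne' : t1.val ≠ t2.val := fun hh => hne (Fin.ext hh)
      rcases lt_or_gt_of_ne hne' with hlt' | hlt'
      · exact hpair t1.val t2.val hlt' (le_of_lt t2.isLt) (Or.inr t2.isLt) h
      · exact hpair t2.val t1.val hlt' (le_of_lt t1.isLt) (Or.inr t1.isLt) h.symm
    have hbij : Function.Bijective
        (fun t : Fin s => ∑ j ∈ Finset.range t.val, (cl j : ZMod s)) :=
      (Fintype.bijective_iff_injective_and_card _).mpr
        ⟨hinj, by rw [Fintype.card_fin, ZMod.card]⟩
    obtain ⟨t, ht⟩ := hbij.2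
      ((∑ j ∈ Finset.range (j₀+1), (cl j : ZMod s)) - ((cl j₀ - cl (j₀+1) : ℕ) : ZMod s))
    have ht' : ∑ j ∈ Finset.range t.val, (cl j : ZMod s)
        = (∑ j ∈ Finset.range (j₀+1), (cl j : ZMod s))
          - ((cl j₀ - cl (j₀+1) : ℕ) : ZMod s) := ht
    have hx0 : ((cl j₀ - cl (j₀+1) : ℕ) : ZMod s) ≠ 0 := by
      intro h
      have h1 := (ZMod.natCast_eq_zero_iff _ s).mp h
      have h2 := Nat.le_of_dvd (by omega) h1
      omega
    have htne : t.val ≠ j₀ + 1 := by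
      intro h
      rw [h] at ht'
      exact hx0 (by
        have := sub_eq_self.mp ht'.symm
        exact this)
    have hcast : ((cl j₀ - cl (j₀+1) : ℕ) : ZMod s)
        = (cl j₀ : ZMod s) - (cl (j₀+1) : ZMod s) := by
      rw [Nat.cast_sub hlt.le]
    have hstep : ∑ j ∈ Finset.range (j₀+1), (cl j : ZMod s)
        = (∑ j ∈ Finset.range j₀, (cl j : ZMod s)) + (cl j₀ : ZMod s) :=
      Finset.sum_range_succ _ _
    have htl := t.isLt
    rcases lt_or_gt_of_ne htne with hc1 | hc2
    · -- t.val ≤ j₀ : S = insert (j₀+1) (Ico t.val j₀)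
      have hd : j₀ + 1 ∉ Finset.Ico t.val j₀ := by
        rw [Finset.mem_Ico]; omega
      refine ⟨insert (j₀+1) (Finset.Ico t.val j₀), ?_, ⟨j₀+1, Finset.mem_insert_self _ _⟩,
        ?_, ?_⟩
      · intro j hj
        rw [Finset.mem_range]
        rcases Finset.mem_insert.mp hj with h | h
        · omega
        · have := Finset.mem_Ico.mp h; omega
      · intro hEq
        have hmem : j₀ ∈ insert (j₀+1) (Finset.Ico t.val j₀) :=
          hEq ▸ Finset.mem_range.mpr (by omega)
        rcases Finset.mem_insert.mp hmem with h | h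
        · omega
        · have := Finset.mem_Ico.mp h; omega
      · apply castdvd
        rw [Finset.sum_insert hd, Finset.sum_Ico_eq_sub _ (by omega : t.val ≤ j₀), ht',
          hcast, hstep]
        ring
    · -- j₀ + 1 < t.val : S = insert j₀ (Ico (j₀+2) t.val)
      have hd : j₀ ∉ Finset.Ico (j₀+2) t.val := by
        rw [Finset.mem_Ico]; omega
      refine ⟨insert j₀ (Finset.Ico (j₀+2) t.val), ?_, ⟨j₀, Finset.mem_insert_self _ _⟩,
        ?_, ?_⟩
      · intro j hj
        rw [Finset.mem_range]
        rcases Finset.mem_insert.mp hj with h | h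
        · omega
        · have := Finset.mem_Ico.mp h; omega
      · intro hEq
        have hmem : j₀+1 ∈ insert j₀ (Finset.Ico (j₀+2) t.val) :=
          hEq ▸ Finset.mem_range.mpr (by omega)
        rcases Finset.mem_insert.mp hmem with h | h
        · omega
        · have := Finset.mem_Ico.mp h; omega
      · apply castdvd
        have hstep2 : ∑ j ∈ Finset.range (j₀+2), (cl j : ZMod s)
            = (∑ j ∈ Finset.range (j₀+1), (cl j : ZMod s)) + (cl (j₀+1) : ZMod s) :=
          Finset.sum_range_succ _ _
        rw [Finset.sum_insert hd, Finset.sum_Ico_eq_sub _ (by omega : j₀+2 ≤ t.val), ht',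
          hcast, hstep2]
        ring

/-- if `(lam, mu)` is in the Kostka semigroup of rank `r`, `lam 0 = r`
(width `r`, parts 0-indexed), `mu` is a rectangle whose columns all have length `s`
(i.e. `mu` has `s` parts all equal to `w > 0`), and `lam` is not a rectangle, then
`(lam, mu)` is reducible. -/
theorem stmt9 (r s w : ℕ) (hw : 0 < w) (lam mu : ℕ → ℕ)
    (hK : KostkaElt r lam mu)
    (hmu : ∀ i, mu i = if i < s then w else 0)
    (hwidth : lam 0 = r)
    (hnotrect : ∃ i, lam i ≠ 0 ∧ lam i ≠ lam 0) :
    KostkaReducible r lam mu := by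
  classical
  obtain ⟨hAl, hAm, hl0, hm0, hsum, hdom⟩ := hK
  obtain ⟨i0, hi0ne, hi0lt⟩ := hnotrect
  have hi0r : i0 < r := by
    by_contra h
    exact hi0ne (hl0 i0 (by omega))
  have hr : 0 < r := by omega
  have hlam_le_r : ∀ i, lam i ≤ r := fun i => hwidth ▸ hAl (Nat.zero_le i)
  have hs : 0 < s := by
    rcases Nat.eq_zero_or_pos s with h | h
    · exfalso
      have hmu0 : ∀ i, mu i = 0 := fun i => by simp [hmu, h]
      have hz : ∑ i ∈ Finset.range r, lam i = 0 := by
        rw [hsum]; exact Finset.sum_eq_zero fun i _ => hmu0 i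
      exact hi0ne (Finset.sum_eq_zero_iff.mp hz i0 (Finset.mem_range.mpr hi0r))
    · exact h
  have hsr : s ≤ r := by
    by_contra h
    have h1 : mu (s-1) = 0 := hm0 (s-1) (by omega)
    have hlt1 : s - 1 < s := by omega
    rw [hmu, if_pos hlt1] at h1
    omega
  have hmusum : ∀ n, s ≤ n → ∑ i ∈ Finset.range n, mu i = s * w := by
    intro n hn
    calc ∑ i ∈ Finset.range n, mu i
        = ∑ i ∈ Finset.range n, (if i < s then w else 0) :=
          Finset.sum_congr rfl (fun i _ => hmu i)
      _ = min s n * w := rect_sum s w n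
      _ = s * w := by rw [min_eq_left hn]
  have hlam_r : ∑ i ∈ Finset.range r, lam i = s * w := by rw [hsum, hmusum r hsr]
  have hlam_s0 : ∀ i, s ≤ i → lam i = 0 := by
    intro i hi
    rcases le_or_gt r i with h | h
    · exact hl0 i h
    · have hdom_s := hdom s hsr
      rw [hmusum s le_rfl] at hdom_s
      have hsplit : ∑ j ∈ Finset.range s, lam j + ∑ j ∈ Finset.Ico s r, lam j
          = ∑ j ∈ Finset.range r, lam j := by
        rw [Finset.range_eq_Ico, Finset.range_eq_Ico]
        exact Finset.sum_Ico_consecutive lam (Nat.zero_le s) hsr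
      have hzero : ∑ j ∈ Finset.Ico s r, lam j = 0 := by omega
      exact Finset.sum_eq_zero_iff.mp hzero i (Finset.mem_Ico.mpr ⟨hi, h⟩)
  have hlam_sum_s : ∑ i ∈ Finset.range s, lam i = s * w := by
    rw [← hlam_r]
    exact Finset.sum_subset (Finset.range_subset_range.2 hsr)
      (fun i _ hi => hlam_s0 i (by simpa using hi))
  -- column lengths
  set cl : ℕ → ℕ := fun j => ((Finset.range s).filter (fun i => j < lam i)).card with hcldef
  have hcl_sum : ∑ j ∈ Finset.range r, cl j = s * w := by
    rw [← hlam_sum_s]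
    calc ∑ j ∈ Finset.range r, cl j
        = ∑ j ∈ Finset.range r, ∑ i ∈ Finset.range s, (if j < lam i then 1 else 0) :=
          Finset.sum_congr rfl fun j _ => Finset.card_filter _ _
      _ = ∑ i ∈ Finset.range s, ∑ j ∈ Finset.range r, (if j < lam i then 1 else 0) :=
          Finset.sum_comm
      _ = ∑ i ∈ Finset.range s, lam i := by
          refine Finset.sum_congr rfl fun i _ => ?_
          rw [← Finset.card_filter]
          have hfr : (Finset.range r).filter (fun j => j < lam i) = Finset.range (lam i) := by
            ext j
            simp only [Finset.mem_filter, Finset.mem_range]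
            exact ⟨fun h => h.2, fun h => ⟨lt_of_lt_of_le h (hlam_le_r i), h⟩⟩
          rw [hfr, Finset.card_range]
  have hdvd : s ∣ ∑ j ∈ Finset.range r, cl j := ⟨w, hcl_sum⟩
  have hcl_le_s : ∀ j, cl j ≤ s := fun j =>
    (Finset.card_filter_le _ _).trans (le_of_eq (Finset.card_range s))
  have hcl_pos : ∀ j, j < r → 0 < cl j := by
    intro j hj
    apply Finset.card_pos.mpr
    exact ⟨0, Finset.mem_filter.mpr ⟨Finset.mem_range.mpr hs, by rw [hwidth]; exact hj⟩⟩
  have hcase : s < r ∨ (r = s ∧ ∃ j₀, j₀ + 1 < s ∧ cl (j₀ + 1) < cl j₀ ∧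
      cl j₀ - cl (j₀ + 1) < s) := by
    rcases lt_or_eq_of_le hsr with h | h
    · exact Or.inl h
    · have h1 : 1 ≤ lam i0 := Nat.pos_of_ne_zero hi0ne
      have h2 : lam i0 < r := lt_of_le_of_ne (hlam_le_r i0) (fun hh => hi0lt (hh.trans hwidth.symm))
      have hi0s : i0 < s := by
        by_contra hh
        exact hi0ne (hlam_s0 i0 (by omega))
      have hupper : cl (lam i0) ≤ i0 := by
        have hsub : (Finset.range s).filter (fun i => lam i0 < lam i) ⊆ Finset.range i0 := by
          intro x hx
          obtain ⟨-, hx2⟩ := Finset.mem_filter.mp hx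
          rw [Finset.mem_range]
          by_contra hc
          exact absurd (hAl (by omega : i0 ≤ x)) (by omega)
        have := Finset.card_le_card hsub
        rwa [Finset.card_range] at this
      have hlower : i0 + 1 ≤ cl (lam i0 - 1) := by
        have hsub : Finset.range (i0+1) ⊆
            (Finset.range s).filter (fun i => lam i0 - 1 < lam i) := by
          intro x hx
          rw [Finset.mem_range] at hx
          refine Finset.mem_filter.mpr ⟨Finset.mem_range.mpr (by omega), ?_⟩
          have := hAl (by omega : x ≤ i0)
          omega
        have := Finset.card_le_card hsub
        rwa [Finset.card_range] at this
      have he1 : lam i0 - 1 + 1 = lam i0 := by omega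
      have hposcl : 0 < cl (lam i0) := hcl_pos (lam i0) h2
      have hlecl : cl (lam i0 - 1) ≤ s := hcl_le_s (lam i0 - 1)
      refine Or.inr ⟨h.symm, lam i0 - 1, by omega, ?_, ?_⟩
      · rw [he1]; omega
      · rw [he1]; omega
  obtain ⟨S, hSsub, hSne, hSneq, hSdvd⟩ := exists_zero_subset s r hs hsr cl hdvd hcase
  set w1 := (∑ j ∈ S, cl j) / s with hw1def
  have hw1s : s * w1 = ∑ j ∈ S, cl j := Nat.mul_div_cancel' hSdvd
  set l1 : ℕ → ℕ := fun i => ((Finset.range (lam i)).filter (fun j => j ∈ S)).card with hl1def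
  set l2 : ℕ → ℕ := fun i => ((Finset.range (lam i)).filter (fun j => j ∉ S)).card with hl2def
  have hsplitl : ∀ i, lam i = l1 i + l2 i := by
    intro i
    rw [hl1def, hl2def]
    simp only
    rw [Finset.card_filter_add_card_filter_not, Finset.card_range]
  have hl1mono : Antitone l1 := by
    intro a b hab
    exact Finset.card_le_card (Finset.filter_subset_filter _ (Finset.range_subset_range.2 (hAl hab)))
  have hl2mono : Antitone l2 := by
    intro a b hab
    exact Finset.card_le_card (Finset.filter_subset_filter _ (Finset.range_subset_range.2 (hAl hab)))
  have hl1zero : ∀ i, s ≤ i → l1 i = 0 := by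
    intro i hi
    rw [hl1def]
    simp [hlam_s0 i hi]
  have hl2zero : ∀ i, s ≤ i → l2 i = 0 := by
    intro i hi
    rw [hl2def]
    simp [hlam_s0 i hi]
  have hl1sum : ∑ i ∈ Finset.range s, l1 i = ∑ j ∈ S, cl j := by
    calc ∑ i ∈ Finset.range s, l1 i
        = ∑ i ∈ Finset.range s, ∑ j ∈ S, (if j < lam i then 1 else 0) := by
          refine Finset.sum_congr rfl fun i _ => ?_
          rw [hl1def]
          simp only
          rw [show (Finset.range (lam i)).filter (fun j => j ∈ S)
              = S.filter (fun j => j < lam i) by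
            ext j
            simp only [Finset.mem_filter, Finset.mem_range]
            tauto]
          exact Finset.card_filter _ _
      _ = ∑ j ∈ S, ∑ i ∈ Finset.range s, (if j < lam i then 1 else 0) := Finset.sum_comm
      _ = ∑ j ∈ S, cl j := Finset.sum_congr rfl fun j _ => (Finset.card_filter _ _).symm
  have hw1w : w1 ≤ w := by
    have h1 : s * w1 ≤ s * w := by
      rw [hw1s, ← hcl_sum]
      exact Finset.sum_le_sum_of_subset hSsub
    exact Nat.le_of_mul_le_mul_left h1 hs
  have hl1sum' : ∑ i ∈ Finset.range s, l1 i = s * w1 := by rw [hl1sum, hw1s]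
  have hl2sum : ∑ i ∈ Finset.range s, l2 i = s * (w - w1) := by
    have h1 : ∑ i ∈ Finset.range s, (l1 i + l2 i) = s * w := by
      rw [← hlam_sum_s]
      exact Finset.sum_congr rfl fun i _ => (hsplitl i).symm
    rw [Finset.sum_add_distrib] at h1
    have hexp : s * w = s * w1 + s * (w - w1) := by
      rw [← Nat.mul_add, Nat.add_sub_cancel' hw1w]
    omega
  have hK1 : KostkaElt r l1 (fun i => if i < s then w1 else 0) :=
    mk_elt r s w1 hs hsr l1 hl1mono hl1zero hl1sum'
  have hK2 : KostkaElt r l2 (fun i => if i < s then w - w1 else 0) :=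
    mk_elt r s (w - w1) hs hsr l2 hl2mono hl2zero hl2sum
  refine ⟨l1, fun i => if i < s then w1 else 0, l2, fun i => if i < s then w - w1 else 0,
    hK1, hK2, hsplitl, ?_, ⟨0, Or.inl ?_⟩, ⟨0, Or.inl ?_⟩⟩
  · intro i
    rw [hmu]
    show (if i < s then w else 0) = (if i < s then w1 else 0) + (if i < s then w - w1 else 0)
    split_ifs with h <;> omega
  · -- l1 0 ≠ 0
    rw [hl1def]
    simp only
    rw [hwidth]
    have : (Finset.range r).filter (fun j => j ∈ S) = S := by
      ext j
      simp only [Finset.mem_filter]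
      exact ⟨fun h => h.2, fun h => ⟨hSsub h, h⟩⟩
    rw [this]
    exact Finset.card_ne_zero_of_mem (hSne.choose_spec)
  · -- l2 0 ≠ 0
    rw [hl2def]
    simp only
    rw [hwidth]
    obtain ⟨x, hx1, hx2⟩ := Finset.exists_of_ssubset (hSsub.ssubset_of_ne hSneq)
    have : x ∈ (Finset.range r).filter (fun j => j ∉ S) :=
      Finset.mem_filter.mpr ⟨hx1, hx2⟩
    exact Finset.card_ne_zero_of_mem this
end

section
/- Let x = (x₁,...,x_t) be a sequence of nonzero integers with Σ_{i=1}^t x_i = 0 and all partial sums Σ_{i≤q} x_i ≥ 0 (a generalized Catalan sequence). If x consists of exactly two runs (a maximal block of positive entries followed by a maximal block of negative entries) and max_i x_i + max_i (−x_i) < t, then x is reducible: there is a nonempty proper subset of indices whose subsequence is generalized Catalan and whose complementary subsequence is also generalized Catalan. -/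
/-!
Since every positive entry precedes every negative one, any set of indices on which `x` sums
to zero is generalized Catalan, and so is its complement. It therefore suffices to find a
consecutive block of the positive run and one of the negative run whose sums cancel, not both
blocks being the whole runs. The cost bound says that the largest absolute value `b` in one run
is smaller than the length `m` of the other; say the negative run. Compare each partial sum
`p i` (`i < m`) of the positive run with the largest partial sum `q j` of absolute values of the
negative run not exceeding it: the gap `p i - q j` lies in `[0, b)`, so by pigeonhole two of
the `m` gaps coincide, and the corresponding differences of partial sums give the two blocks.
-/

open Finset

def IsGenCatalanOn (x : ℕ → ℤ) (I : Finset ℕ) : Prop :=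
  ∑ i ∈ I, x i = 0 ∧ ∀ q, 0 ≤ ∑ i ∈ I.filter (· < q), x i

def IsReducible (x : ℕ → ℤ) (t : ℕ) : Prop :=
  ∃ I ⊆ range t, I.Nonempty ∧ I ≠ range t ∧
    IsGenCatalanOn x I ∧ IsGenCatalanOn x (range t \ I)

theorem exists_sub_eq_sub_of_step_le (p q : ℕ → ℤ) {m n b : ℕ}
    (hp : MonotoneOn p (Set.Iic m)) (hp0 : p 0 = 0) (hq0 : q 0 = 0) (hpq : p m = q n)
    (hq : ∀ j < n, q (j + 1) ≤ q j + b) (hb : 0 < b) (hbm : b < m) :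
    ∃ i i' j j', i < i' ∧ i' < m ∧ j ≤ j' ∧ j' ≤ n ∧ p i' - p i = q j' - q j := by
  have hp_le {i i'} (h : i ≤ i') (hi' : i' ≤ m) : p i ≤ p i' :=
    hp (by simp only [Set.mem_Iic]; omega) (by simpa using hi') h
  let J i := Nat.findGreatest (fun j => q j ≤ p i) n
  have hJ_le i : J i ≤ n := Nat.findGreatest_le n
  have hqJ {i} (hi : i ≤ m) : q (J i) ≤ p i :=
    Nat.findGreatest_spec (P := fun j => q j ≤ p i) (Nat.zero_le n)
      (by rw [hq0, ← hp0]; exact hp_le (Nat.zero_le i) hi)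
  have hJ_mono {i i'} (h : i ≤ i') (hi' : i' ≤ m) : J i ≤ J i' :=
    Nat.le_findGreatest (hJ_le i) ((hqJ (h.trans hi')).trans (hp_le h hi'))
  have hres {i} (hi : i ≤ m) : p i - q (J i) ∈ Ico (0 : ℤ) b := by
    refine mem_Ico.2 ⟨sub_nonneg.2 (hqJ hi), ?_⟩
    rcases (hJ_le i).lt_or_eq with hJn | hJn
    · have hlt : p i < q (J i + 1) := not_le.1 <|
        Nat.findGreatest_is_greatest (P := fun j => q j ≤ p i) (Nat.lt_succ_self _) hJn
      linarith [hq _ hJn]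
    · have := hp_le hi le_rfl
      rw [hpq, ← hJn] at this
      omega
  obtain ⟨i, hi, i', hi', hne, heq⟩ := exists_ne_map_eq_of_card_lt_of_maps_to
    (s := range m) (by simpa using hbm) fun i hi => hres (mem_range.1 hi).le
  rw [mem_range] at hi hi'
  wlog hii' : i < i' generalizing i i'
  · exact this i' hi' i hi hne.symm heq.symm (by omega)
  exact ⟨i, i', J i, J i', hii', hi', hJ_mono hii'.le hi'.le, hJ_le i', by linarith⟩

theorem le_sup_toNat {ι : Type*} {s : Finset ι} (f : ι → ℤ) {i : ι} (hi : i ∈ s) :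
    f i ≤ ((s.sup fun i => (f i).toNat : ℕ) : ℤ) :=
  (Int.self_le_toNat _).trans (by exact_mod_cast le_sup (f := fun i => (f i).toNat) hi)

section TwoRuns

variable {x : ℕ → ℤ} {m t : ℕ}

theorem isGenCatalanOn_of_sum_eq_zero (hpos : ∀ i < m, 0 < x i)
    (hneg : ∀ i, m ≤ i → i < t → x i < 0) {I : Finset ℕ} (hI : I ⊆ range t)
    (hsum : ∑ i ∈ I, x i = 0) : IsGenCatalanOn x I := by
  refine ⟨hsum, fun q => ?_⟩
  by_cases hqm : q ≤ m
  · exact sum_nonneg fun i hi => (hpos i ((mem_filter.1 hi).2.trans_le hqm)).le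
  · have htail : ∑ i ∈ I.filter (¬ · < q), x i ≤ 0 := sum_nonpos fun i hi => by
      rw [mem_filter] at hi
      exact (hneg i (by omega) (mem_range.1 (hI hi.1))).le
    linarith [sum_filter_add_sum_filter_not I (· < q) x]

theorem isReducible_of_sum_eq_zero (hpos : ∀ i < m, 0 < x i)
    (hneg : ∀ i, m ≤ i → i < t → x i < 0) (hsum : ∑ i ∈ range t, x i = 0)
    {I : Finset ℕ} (hI : I ⊆ range t) (hne : I.Nonempty) (hproper : I ≠ range t)
    (hIsum : ∑ i ∈ I, x i = 0) : IsReducible x t :=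
  ⟨I, hI, hne, hproper, isGenCatalanOn_of_sum_eq_zero hpos hneg hI hIsum,
    isGenCatalanOn_of_sum_eq_zero hpos hneg sdiff_subset
      (by rw [sum_sdiff_eq_sub hI, hsum, hIsum, sub_zero])⟩

theorem isReducible_of_Ico_union (hpos : ∀ i < m, 0 < x i)
    (hneg : ∀ i, m ≤ i → i < t → x i < 0) (hsum : ∑ i ∈ range t, x i = 0)
    {a a' c c' : ℕ} (ha : a ≤ a') (hac : a' ≤ c) (hc : c ≤ c') (hct : c' ≤ t)
    (hne : a < a' ∨ c < c') (hproper : 0 < a ∨ a' < c ∨ c' < t)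
    (hblocks : ∑ i ∈ Ico a a', x i + ∑ i ∈ Ico c c', x i = 0) : IsReducible x t := by
  have hdisj : Disjoint (Ico a a') (Ico c c') :=
    (Ico_disjoint_Ico_consecutive a a' c').mono_right (Ico_subset_Ico_left hac)
  refine isReducible_of_sum_eq_zero hpos hneg hsum (I := Ico a a' ∪ Ico c c') ?_ ?_ ?_
    (by rwa [sum_union hdisj])
  · intro i hi
    simp only [mem_union, mem_Ico, mem_range] at hi ⊢
    omega
  · rcases hne with h | h
    · exact ⟨a, by simp [h]⟩
    · exact ⟨c, by simp [h]⟩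
  · intro hI
    obtain ⟨e, he, heI⟩ : ∃ e < t, e ∉ Ico a a' ∪ Ico c c' := by
      rcases hproper with h | h | h
      · exact ⟨0, by omega, by simp only [mem_union, mem_Ico]; omega⟩
      · exact ⟨a', by omega, by simp only [mem_union, mem_Ico]; omega⟩
      · exact ⟨c', h, by simp only [mem_union, mem_Ico]; omega⟩
    exact heI (hI ▸ mem_range.2 he)

theorem monotoneOn_sum_range (hpos : ∀ i < m, 0 < x i) :
    MonotoneOn (fun k => ∑ i ∈ range k, x i) (Set.Iic m) := fun a _ a' ha' h => by
  rw [← sub_nonneg, ← sum_Ico_eq_sub _ h]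
  exact sum_nonneg fun i hi => (hpos i (by simp only [mem_Ico, Set.mem_Iic] at hi ha'; omega)).le

theorem monotoneOn_neg_sum_Ico (hneg : ∀ i, m ≤ i → i < t → x i < 0) :
    MonotoneOn (fun j => -∑ i ∈ Ico m (m + j), x i) (Set.Iic (t - m)) := fun j _ j' hj' h => by
  rw [neg_le_neg_iff, ← sum_Ico_consecutive x (m.le_add_right j) (by omega : m + j ≤ m + j'),
    add_le_iff_nonpos_right]
  refine sum_nonpos fun i hi => (hneg i ?_ ?_).le <;>
    simp only [mem_Ico, Set.mem_Iic] at hi hj' <;> omega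

theorem sum_range_eq_neg_sum_Ico (hmt : m ≤ t) (hsum : ∑ i ∈ range t, x i = 0) :
    ∑ i ∈ range m, x i = -∑ i ∈ Ico m (m + (t - m)), x i := by
  rw [eq_neg_iff_add_eq_zero, sum_range_add_sum_Ico x (by omega), Nat.add_sub_cancel' hmt, hsum]

theorem isReducible_of_sup_neg_lt (hpos : ∀ i < m, 0 < x i)
    (hneg : ∀ i, m ≤ i → i < t → x i < 0) (hsum : ∑ i ∈ range t, x i = 0) (hmt : m < t)
    (hB : (Ico m t).sup (fun i => (-x i).toNat) < m) : IsReducible x t := by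
  have hstep (j) (hj : j < t - m) : -∑ i ∈ Ico m (m + (j + 1)), x i ≤
      -∑ i ∈ Ico m (m + j), x i + ((Ico m t).sup fun i => (-x i).toNat : ℕ) := by
    rw [← add_assoc, sum_Ico_succ_top (m.le_add_right j)]
    have hj' : m + j ∈ Ico m t := mem_Ico.2 ⟨m.le_add_right j, by omega⟩
    linarith [le_sup_toNat (fun i => -x i) hj']
  have hB0 : 0 < (Ico m t).sup (fun i => (-x i).toNat) := by
    have := le_sup_toNat (fun i => -x i) (mem_Ico.2 ⟨le_rfl, hmt⟩)
    have := hneg m le_rfl hmt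
    omega
  obtain ⟨i, i', j, j', hii', hi'm, hjj', hj'n, heq⟩ := exists_sub_eq_sub_of_step_le _ _
    (monotoneOn_sum_range hpos) (sum_range_zero x) (by simp)
    (sum_range_eq_neg_sum_Ico hmt.le hsum) hstep hB0 hB
  refine isReducible_of_Ico_union (c := m + j) (c' := m + j') hpos hneg hsum hii'.le
    (by omega) (by omega) (by omega) (Or.inl hii') (by omega) ?_
  rw [sum_Ico_eq_sub _ hii'.le]
  linarith [sum_Ico_consecutive x (m.le_add_right j) (by omega : m + j ≤ m + j')]

theorem isReducible_of_sup_pos_lt (hm0 : 0 < m) (hpos : ∀ i < m, 0 < x i)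
    (hneg : ∀ i, m ≤ i → i < t → x i < 0) (hsum : ∑ i ∈ range t, x i = 0) (hmt : m < t)
    (hA : (range m).sup (fun i => (x i).toNat) < t - m) : IsReducible x t := by
  have hstep (i) (hi : i < m) : ∑ k ∈ range (i + 1), x k ≤
      ∑ k ∈ range i, x k + ((range m).sup fun i => (x i).toNat : ℕ) := by
    rw [sum_range_succ]
    linarith [le_sup_toNat x (mem_range.2 hi)]
  have hA0 : 0 < (range m).sup (fun i => (x i).toNat) := by
    exact_mod_cast (hpos 0 hm0).trans_le (le_sup_toNat x (mem_range.2 hm0))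
  obtain ⟨j, j', i, i', hjj', hj'n, hii', hi'm, heq⟩ := exists_sub_eq_sub_of_step_le _
    (fun k => ∑ i ∈ range k, x i) (monotoneOn_neg_sum_Ico hneg) (by simp) (sum_range_zero x)
    (sum_range_eq_neg_sum_Ico hmt.le hsum).symm hstep hA0 hA
  refine isReducible_of_Ico_union (c := m + j) (c' := m + j') hpos hneg hsum hii'
    (by omega) (by omega) (by omega) (Or.inr (by omega)) (by omega) ?_
  rw [sum_Ico_eq_sub _ hii']
  linarith [sum_Ico_consecutive x (m.le_add_right j) (by omega : m + j ≤ m + j')]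

end TwoRuns

theorem stmt11_general (t m : ℕ) (x : ℕ → ℤ)
    (hm0 : 0 < m) (hmt : m < t)
    (hpos : ∀ i, i < m → 0 < x i) (hneg : ∀ i, m ≤ i → i < t → x i < 0)
    (hsum : ∑ i ∈ Finset.range t, x i = 0)
    (hcost : ((Finset.range m).sup fun i => (x i).toNat) +
        ((Finset.Ico m t).sup fun i => (-x i).toNat) < t) :
    ∃ I ⊆ Finset.range t, I.Nonempty ∧ I ≠ Finset.range t ∧
      (∑ i ∈ I, x i = 0) ∧
      (∀ q, 0 ≤ ∑ i ∈ I.filter (· < q), x i) ∧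
      (∑ i ∈ Finset.range t \ I, x i = 0) ∧
      (∀ q, 0 ≤ ∑ i ∈ (Finset.range t \ I).filter (· < q), x i) := by
  suffices IsReducible x t by
    obtain ⟨I, hI, hne, hproper, ⟨h₁, h₂⟩, h₃, h₄⟩ := this
    exact ⟨I, hI, hne, hproper, h₁, h₂, h₃, h₄⟩
  rcases (by omega : (Ico m t).sup (fun i => (-x i).toNat) < m ∨
      (range m).sup (fun i => (x i).toNat) < t - m) with hB | hA
  · exact isReducible_of_sup_neg_lt hpos hneg hsum hmt hB
  · exact isReducible_of_sup_pos_lt hm0 hpos hneg hsum hmt hA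

/-- a generalized Catalan sequence `x 0, ..., x (t-1)` (nonzero integers,
total sum zero, nonnegative prefix sums) consisting of exactly two runs — positives on
`[0, m)` followed by negatives on `[m, t)` — with cost (max of the first run plus max of
the absolute values in the second run) less than its width `t` is reducible: there is a
nonempty proper subset `I` of the indices such that both the subsequence indexed by `I`
and the complementary subsequence are generalized Catalan. -/
theorem stmt11 (t m : ℕ) (x : ℕ → ℤ)
    (hm0 : 0 < m) (hmt : m < t)
    (hpos : ∀ i, i < m → 0 < x i) (hneg : ∀ i, m ≤ i → i < t → x i < 0)
    (hsum : ∑ i ∈ Finset.range t, x i = 0)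
    (hpref : ∀ q, q ≤ t → 0 ≤ ∑ i ∈ Finset.range q, x i)
    (hcost : ((Finset.range m).sup fun i => (x i).toNat) +
        ((Finset.Ico m t).sup fun i => (-x i).toNat) < t) :
    ∃ I ⊆ Finset.range t, I.Nonempty ∧ I ≠ Finset.range t ∧
      (∑ i ∈ I, x i = 0) ∧
      (∀ q, 0 ≤ ∑ i ∈ I.filter (· < q), x i) ∧
      (∑ i ∈ Finset.range t \ I, x i = 0) ∧
      (∀ q, 0 ≤ ∑ i ∈ (Finset.range t \ I).filter (· < q), x i) :=
  stmt11_general t m x hm0 hmt hpos hneg hsum hcost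
end

section
/- With λ̄ and μ̄ as in the Subset Sum reduction (λ̄ has columns of lengths A+1, a₁,...,a_d; μ̄ has columns of lengths A+1+(A−b) and b, where A = Σ a_i, a₁ ≥ ... ≥ a_d > 0, 0 < b ≤ A), the pair (λ̄, μ̄) decomposes nontrivially in the Kostka semigroup (i.e., (λ̄,μ̄) = (λ•,μ•)+(λ°,μ°) with both summands nonzero pairs of partitions satisfying dominance and equal size) if and only if there exists a subset S ⊆ {1,...,d} with Σ_{i∈S} a_i = b. -/
/-!
Write `λ̄ = col(A+1) + cols(a)` and `μ̄ = col(2A+1-b) + col(b)`. As `μ̄` has two columns, in a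
nontrivial decomposition each `μ`-summand is a single column, so one summand `(λ•, μ•)` has
`μ• = col(b)` and hence `|λ•| = b ≤ A`. Then `λ•` is too small to reach row `A`, and because
the other summand is a partition, every column of `λ•` is one of the columns `a_i` of `λ̄`;
these columns form the subset. Conversely, a subset `S` with sum `b` gives the decomposition
`(cols(a_S), col(b)) + (col(A+1) + cols(a_{∁S}), col(2A+1-b))`.
-/

open Finset

namespace Kostka

def column (c i : ℕ) : ℕ := if i < c then 1 else 0

/-- Partitions are encoded by their row lengths; this one has the columns `a j`, `j ∈ T`. -/
def ofColumns (T : Finset ℕ) (a : ℕ → ℕ) (i : ℕ) : ℕ := #{j ∈ T | i < a j}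

@[simp]
lemma column_zero : column 0 = 0 := by
  funext i
  simp [column]

lemma column_of_lt {c i : ℕ} (h : i < c) : column c i = 1 := if_pos h

lemma column_of_le {c i : ℕ} (h : c ≤ i) : column c i = 0 := if_neg (not_lt.mpr h)

lemma antitone_column (c : ℕ) : Antitone (column c) := by
  intro i j hij
  simp only [column]
  split_ifs <;> omega

lemma sum_range_column (c t : ℕ) : ∑ i ∈ range t, column c i = min t c := by
  induction t with
  | zero => simp
  | succ n ih =>
    rw [sum_range_succ, ih, column]
    split_ifs <;> omega

lemma antitone_ofColumns (T : Finset ℕ) (a : ℕ → ℕ) : Antitone (ofColumns T a) :=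
  fun _ _ hij => card_le_card (monotone_filter_right T fun _ _ h => hij.trans_lt h)

lemma sum_range_ofColumns (T : Finset ℕ) (a : ℕ → ℕ) (t : ℕ) :
    ∑ i ∈ range t, ofColumns T a i = ∑ j ∈ T, min t (a j) := by
  simp only [ofColumns, card_filter]
  rw [sum_comm]
  exact sum_congr rfl fun j _ => sum_range_column (a j) t

lemma ofColumns_of_forall_le {T : Finset ℕ} {a : ℕ → ℕ} {i : ℕ} (h : ∀ j ∈ T, a j ≤ i) :
    ofColumns T a i = 0 := by
  rw [ofColumns, card_eq_zero, filter_eq_empty_iff]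
  exact fun j hj => not_lt.mpr (h j hj)

lemma ofColumns_eq_succ_add (T : Finset ℕ) (a : ℕ → ℕ) (ℓ : ℕ) :
    ofColumns T a ℓ = ofColumns T a (ℓ + 1) + #{j ∈ T | a j = ℓ + 1} := by
  simp only [ofColumns, card_filter, ← sum_add_distrib]
  exact sum_congr rfl fun j _ => by split_ifs <;> omega

lemma ofColumns_sdiff_add {S U : Finset ℕ} (h : S ⊆ U) (a : ℕ → ℕ) (i : ℕ) :
    ofColumns (U \ S) a i + ofColumns S a i = ofColumns U a i := by
  simp only [ofColumns, card_filter]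
  exact sum_sdiff h

lemma kostkaElt_column_add_ofColumns {r c : ℕ} {T : Finset ℕ} {a : ℕ → ℕ}
    (h : c + ∑ j ∈ T, a j ≤ r) :
    KostkaElt r (column c + ofColumns T a) (column (c + ∑ j ∈ T, a j)) := by
  have ha : ∀ j ∈ T, a j ≤ ∑ j ∈ T, a j := fun j hj => single_le_sum (fun _ _ => Nat.zero_le _) hj
  refine ⟨(antitone_column c).add (antitone_ofColumns T a), antitone_column _,
    fun i hi => ?_, fun i hi => column_of_le (by omega), ?_, fun t _ => ?_⟩
  · rw [Pi.add_apply, column_of_le (by omega),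
      ofColumns_of_forall_le fun j hj => by have := ha j hj; omega]
  · simp only [Pi.add_apply, sum_add_distrib, sum_range_column, sum_range_ofColumns]
    rw [sum_congr rfl fun j hj => min_eq_right (by have := ha j hj; omega),
      min_eq_right (by omega : c ≤ r), min_eq_right h]
  · simp only [Pi.add_apply, sum_add_distrib, sum_range_column, sum_range_ofColumns]
    have hsub := le_sum_of_subadditive (min t) (by simp) (fun x y => by omega) T a
    omega

lemma _root_.KostkaElt.eq_zero_of_mu_zero {r : ℕ} {l m : ℕ → ℕ} (h : KostkaElt r l m) (h0 : m 0 = 0)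
    (i : ℕ) : l i = 0 ∧ m i = 0 := by
  obtain ⟨-, hm, hl, -, hsum, -⟩ := h
  have hm0 : ∀ j, m j = 0 := fun j => Nat.eq_zero_of_le_zero (h0 ▸ hm (Nat.zero_le j))
  refine ⟨?_, hm0 i⟩
  by_cases hi : i < r
  · rw [sum_eq_zero fun j _ => hm0 j, sum_eq_zero_iff] at hsum
    exact hsum i (mem_range.mpr hi)
  · exact hl i (not_lt.mp hi)

lemma eq_column_or_eq_column {m₁ m₂ : ℕ → ℕ} {p q : ℕ} (h₁ : Antitone m₁) (h₂ : Antitone m₂)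
    (h₁0 : m₁ 0 ≠ 0) (h₂0 : m₂ 0 ≠ 0) (hqp : q < p)
    (h : ∀ i, m₁ i + m₂ i = column p i + column q i) : m₁ = column q ∨ m₂ = column q := by
  have hcol : ∀ c i, column c i ≤ 1 := fun c i => by unfold column; split_ifs <;> omega
  have hle : ∀ i, m₁ i ≤ 1 ∧ m₂ i ≤ 1 := fun i => by
    have h0 := h 0
    have := hcol p 0
    have := hcol q 0
    have := h₁ (Nat.zero_le i)
    have := h₂ (Nat.zero_le i)
    omega
  have htop : ∀ i < q, m₁ i = 1 ∧ m₂ i = 1 := fun i hi => by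
    have hi' := h i
    rw [column_of_lt (hi.trans hqp), column_of_lt hi] at hi'
    have := hle i
    omega
  have hq : m₁ q = 0 ∨ m₂ q = 0 := by
    have := h q
    rw [column_of_lt hqp, column_of_le le_rfl] at this
    omega
  have of_eq_zero : ∀ m : ℕ → ℕ, Antitone m → m q = 0 → (∀ i < q, m i = 1) → m = column q :=
    fun m hm hmq hmtop => funext fun i => by
      rcases lt_or_ge i q with hi | hi
      · rw [hmtop i hi, column_of_lt hi]
      · rw [column_of_le hi]; exact Nat.eq_zero_of_le_zero (hmq ▸ hm hi)
  exact hq.imp (fun hq₁ => of_eq_zero m₁ h₁ hq₁ fun i hi => (htop i hi).1)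
    (fun hq₂ => of_eq_zero m₂ h₂ hq₂ fun i hi => (htop i hi).2)

lemma _root_.Antitone.sum_range_succ_mul_tsub_add {f : ℕ → ℕ} (hf : Antitone f) (n : ℕ) :
    ∑ ℓ ∈ range n, (ℓ + 1) * (f ℓ - f (ℓ + 1)) + n * f n = ∑ ℓ ∈ range n, f ℓ := by
  induction n with
  | zero => simp
  | succ n ih =>
    rw [sum_range_succ, sum_range_succ (f := f), ← ih]
    have : f (n + 1) ≤ f n := hf n.le_succ
    have : (n + 1) * (f n - f (n + 1)) + (n + 1) * f (n + 1) = (n + 1) * f n := by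
      rw [← Nat.mul_add, Nat.sub_add_cancel this]
    linarith

/-- `f` has `f ℓ - f (ℓ + 1)` columns of length `ℓ + 1`; take that many of the `a j` equal to
`ℓ + 1`. -/
lemma exists_subset_sum_eq_sum_range {T : Finset ℕ} {a f : ℕ → ℕ} {n : ℕ} (hf : Antitone f)
    (hn : f n = 0) (hdrop : ∀ ℓ, f ℓ - f (ℓ + 1) ≤ #{j ∈ T | a j = ℓ + 1}) :
    ∃ S ⊆ T, ∑ j ∈ S, a j = ∑ i ∈ range n, f i := by
  choose U hUT hUcard using fun ℓ => exists_subset_card_eq (hdrop ℓ)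
  have hU : ∀ ℓ, ∀ j ∈ U ℓ, j ∈ T ∧ a j = ℓ + 1 := fun ℓ j hj => mem_filter.mp (hUT ℓ hj)
  have hdisj : (range n : Set ℕ).PairwiseDisjoint U := fun ℓ _ ℓ' _ hne =>
    disjoint_left.mpr fun j hj hj' => hne (by have := (hU ℓ j hj).2; have := (hU ℓ' j hj').2; omega)
  refine ⟨(range n).biUnion U, biUnion_subset.mpr fun ℓ _ j hj => (hU ℓ j hj).1, ?_⟩
  calc ∑ j ∈ (range n).biUnion U, a j = ∑ ℓ ∈ range n, (ℓ + 1) * (f ℓ - f (ℓ + 1)) := by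
        rw [sum_biUnion hdisj]
        refine sum_congr rfl fun ℓ _ => ?_
        rw [sum_congr rfl fun j hj => (hU ℓ j hj).2, sum_const, hUcard, smul_eq_mul, mul_comm]
    _ = ∑ i ∈ range n, f i := by simpa [hn] using hf.sum_range_succ_mul_tsub_add n

/-- Where `l + l'` has the columns `a` (and `k` columns longer than `n`), a drop of `l` can only
occur at the end of a column of `a`, since `l'` cannot increase. -/
lemma tsub_succ_le_card_filter {T : Finset ℕ} {a l l' : ℕ → ℕ} {n k : ℕ} (hl : Antitone l)
    (hl' : Antitone l') (hn : l n = 0) (h : ∀ i ≤ n, l i + l' i = k + ofColumns T a i) (ℓ : ℕ) :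
    l ℓ - l (ℓ + 1) ≤ #{j ∈ T | a j = ℓ + 1} := by
  rcases lt_or_ge ℓ n with hℓ | hℓ
  · have := h ℓ hℓ.le
    have := h (ℓ + 1) hℓ
    have := ofColumns_eq_succ_add T a ℓ
    have := hl' (by omega : ℓ ≤ ℓ + 1)
    omega
  · have := hl hℓ
    omega

lemma exists_subset_sum_eq_of_kostkaElt {T : Finset ℕ} {a l l' : ℕ → ℕ} {A b r : ℕ}
    (h : KostkaElt r l (column b)) (hl' : Antitone l')
    (hsplit : ∀ i, l i + l' i = column (A + 1) i + ofColumns T a i) (hbA : b ≤ A) (hAr : A < r) :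
    ∃ S ⊆ T, ∑ j ∈ S, a j = b := by
  obtain ⟨hl, -, -, -, hsum, -⟩ := h
  have hsize : ∑ i ∈ range r, l i = b := by rw [hsum, sum_range_column]; omega
  have hlA : l A = 0 := by
    by_contra hne
    have hbig := card_nsmul_le_sum (range (A + 1)) (fun i => l i) 1 fun i hi =>
      Nat.one_le_iff_ne_zero.mpr fun h0 => hne (Nat.eq_zero_of_le_zero
        (h0 ▸ hl (mem_range_succ_iff.mp hi)))
    have hsub := sum_le_sum_of_subset (f := l)
      (range_subset_range.mpr hAr : range (A + 1) ⊆ range r)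
    simp only [card_range, smul_eq_mul, mul_one] at hbig
    omega
  have hA : ∑ i ∈ range A, l i = b := by
    rw [← hsize]
    exact sum_subset (range_subset_range.mpr hAr.le) fun i _ hi =>
      Nat.eq_zero_of_le_zero (hlA ▸ hl (not_lt.mp (mem_range.not.mp hi)))
  rw [← hA]
  exact exists_subset_sum_eq_sum_range hl hlA <| tsub_succ_le_card_filter hl hl' hlA (k := 1)
    fun i hi => by rw [hsplit, column_of_lt (by omega)]

lemma exists_subset_sum_eq_of_kostkaReducible {T : Finset ℕ} {a : ℕ → ℕ} {A b p r : ℕ}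
    (h : KostkaReducible r (column (A + 1) + ofColumns T a) (column p + column b))
    (hbp : b < p) (hbA : b ≤ A) (hAr : A < r) : ∃ S ⊆ T, ∑ j ∈ S, a j = b := by
  obtain ⟨l₁, m₁, l₂, m₂, h₁, h₂, hl, hm, ⟨i₁, hi₁⟩, ⟨i₂, hi₂⟩⟩ := h
  have hm₁ : m₁ 0 ≠ 0 := fun h => by have := h₁.eq_zero_of_mu_zero h i₁; omega
  have hm₂ : m₂ 0 ≠ 0 := fun h => by have := h₂.eq_zero_of_mu_zero h i₂; omega
  rcases eq_column_or_eq_column h₁.2.1 h₂.2.1 hm₁ hm₂ hbp (fun i => (hm i).symm) with h | h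
  · exact exists_subset_sum_eq_of_kostkaElt (h ▸ h₁) h₂.1 (fun i => (hl i).symm) hbA hAr
  · exact exists_subset_sum_eq_of_kostkaElt (h ▸ h₂) h₁.1
      (fun i => (add_comm _ _).trans (hl i).symm) hbA hAr

lemma kostkaReducible_of_subset_sum_eq {T S : Finset ℕ} {a : ℕ → ℕ} {b : ℕ} (hS : S ⊆ T)
    (hSb : ∑ j ∈ S, a j = b) (hb0 : 0 < b) :
    KostkaReducible (2 * ∑ j ∈ T, a j + 1) (column (∑ j ∈ T, a j + 1) + ofColumns T a)
      (column (∑ j ∈ T, a j + 1 + (∑ j ∈ T, a j - b)) + column b) := by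
  have hcompl : ∑ j ∈ T \ S, a j + b = ∑ j ∈ T, a j := hSb ▸ sum_sdiff hS
  have h₁ := kostkaElt_column_add_ofColumns (r := 2 * ∑ j ∈ T, a j + 1) (c := 0) (T := S) (a := a)
    (by omega)
  have h₂ := kostkaElt_column_add_ofColumns (r := 2 * ∑ j ∈ T, a j + 1) (c := ∑ j ∈ T, a j + 1)
    (T := T \ S) (a := a) (by omega)
  rw [column_zero, zero_add, zero_add, hSb] at h₁
  rw [show ∑ j ∈ T \ S, a j = ∑ j ∈ T, a j - b by omega] at h₂
  refine ⟨_, _, _, _, h₁, h₂, fun i => ?_, fun i => add_comm _ _, ⟨0, .inr ?_⟩, ⟨0, .inr ?_⟩⟩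
  · rw [Pi.add_apply, Pi.add_apply, ← ofColumns_sdiff_add hS]
    ring
  · rw [column_of_lt hb0]; simp
  · rw [column_of_lt (by omega)]; simp

end Kostka

open Kostka

theorem stmt14_general (d A b : ℕ) (a : ℕ → ℕ)
    (hA : A = ∑ i ∈ Finset.range d, a i) (hb0 : 0 < b) (hbA : b ≤ A)
    (lamb mub : ℕ → ℕ)
    (hlamb : ∀ i, lamb i =
      (if i < A + 1 then 1 else 0) + ((Finset.range d).filter fun j => i < a j).card)
    (hmub : ∀ i, mub i =
      (if i < A + 1 + (A - b) then 1 else 0) + (if i < b then 1 else 0)) :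
    KostkaReducible (2 * A + 1) lamb mub ↔
      ∃ S ⊆ Finset.range d, ∑ i ∈ S, a i = b := by
  obtain rfl : lamb = column (A + 1) + ofColumns (range d) a := funext hlamb
  obtain rfl : mub = column (A + 1 + (A - b)) + column b := funext hmub
  refine ⟨fun h => exists_subset_sum_eq_of_kostkaReducible h (by omega) hbA (by omega), ?_⟩
  rintro ⟨S, hS, hSb⟩
  subst hA
  exact kostkaReducible_of_subset_sum_eq hS hSb hb0

/-- with `lamb`, `mub` as in the Subset Sum reduction (columns
`A + 1, a 0, ..., a (d-1)` and `A + 1 + (A - b), b` respectively), the pair `(lamb, mub)`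
admits a nontrivial decomposition in the Kostka semigroup (of rank `2A + 1`, which bounds
the number of parts) iff some subset of the `a i` sums to `b`. -/
theorem stmt14 (d A b : ℕ) (a : ℕ → ℕ)
    (hsort : ∀ i j, i ≤ j → j < d → a j ≤ a i) (hpos : ∀ i, i < d → 0 < a i)
    (hA : A = ∑ i ∈ Finset.range d, a i) (hb0 : 0 < b) (hbA : b ≤ A)
    (lamb mub : ℕ → ℕ)
    (hlamb : ∀ i, lamb i =
      (if i < A + 1 then 1 else 0) + ((Finset.range d).filter fun j => i < a j).card)
    (hmub : ∀ i, mub i =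
      (if i < A + 1 + (A - b) then 1 else 0) + (if i < b then 1 else 0)) :
    KostkaReducible (2 * A + 1) lamb mub ↔
      ∃ S ⊆ Finset.range d, ∑ i ∈ S, a i = b :=
  stmt14_general d A b a hA hb0 hbA lamb mub hlamb hmub
end

section
/- Let λ ≥_Dom μ be partitions of equal size. If λ = λ¹ + λ² and μ = μ¹ + μ² where, for some index j, the first j parts of λ¹ and μ¹ agree (λ¹_i = μ¹_i for i ≤ j), the first j parts of λ² and μ² agree, Σ_{i≤j} λ_i = Σ_{i≤j} μ_i, and the truncated tails satisfy (λ_{j+1},...,λ_r) ≥_Dom (μ_{j+1},...,μ_r) with equal sums, then λ¹ ≥_Dom μ¹ and λ² ≥_Dom μ² provided the tails of (λ¹,μ¹) and (λ²,μ²) are proportional rescalings (by factors 1/λ_j and (λ_j−1)/λ_j respectively) of the tails of (λ,μ). -/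
/-! On the first `j` places the summands are `1` and `λ - 1` (resp. `μ - 1`); on the tails
they are the tails of `λ` and `μ` rescaled by `1/λ_j` and `(λ_j - 1)/λ_j`. Hence `λ¹ - μ¹` and
`λ² - μ²` are `λ - μ` multiplied by a nonnegative weight that is constant on `[0, j)` and on
`[j, ∞)`. Since `λ - μ` has vanishing partial sum at `j`, each partial sum of such a product is
the corresponding partial sum of `λ - μ` times the weight of the current block, so dominance
passes to both summands. That the summands are weakly decreasing comes down to
`μ_{j+1} ≤ λ_{j+1} ≤ λ_j ≤ μ_j`, which the equality of partial sums at `j` forces. -/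

open Finset

/-- The dominance order `x ≥_Dom y` on sequences of length `r`. -/
def Dominates_s19 {M : Type*} [AddCommMonoid M] [LE M] (r : ℕ) (x y : ℕ → M) : Prop :=
  (∀ t, t ≤ r → ∑ i ∈ range t, y i ≤ ∑ i ∈ range t, x i) ∧
    ∑ i ∈ range r, x i = ∑ i ∈ range r, y i

theorem Dominates_s19.natCast {R : Type*} [Semiring R] [PartialOrder R] [IsStrictOrderedRing R]
    {r : ℕ} {x y : ℕ → ℕ} (h : Dominates_s19 r x y) :
    Dominates_s19 r (fun i => (x i : R)) (fun i => (y i : R)) :=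
  ⟨fun t ht => by dsimp only; exact_mod_cast h.1 t ht, by dsimp only; exact_mod_cast h.2⟩

section OrderedCancelAddMonoid

variable {M : Type*} [AddCommMonoid M] [PartialOrder M] [IsOrderedCancelAddMonoid M]
  {r n : ℕ} {x y : ℕ → M}

theorem Dominates_s19.apply_le_of_sum_range_succ_eq (h : Dominates_s19 r x y) (hn : n ≤ r)
    (heq : ∑ i ∈ range (n + 1), x i = ∑ i ∈ range (n + 1), y i) : x n ≤ y n := by
  rw [sum_range_succ, sum_range_succ] at heq
  refine le_of_add_le_add_left (a := ∑ i ∈ range n, x i) ?_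
  rw [heq]
  exact add_le_add_left (h.1 n hn) _

theorem Dominates_s19.apply_le_of_sum_range_eq (h : Dominates_s19 r x y) (hn : n < r)
    (heq : ∑ i ∈ range n, x i = ∑ i ∈ range n, y i) : y n ≤ x n := by
  have hle := h.1 (n + 1) hn
  rw [sum_range_succ, sum_range_succ, heq] at hle
  exact le_of_add_le_add_left hle

end OrderedCancelAddMonoid

theorem sum_range_ite_mul_of_sum_range_eq_zero {R : Type*} [Semiring R] {d : ℕ → R} {j : ℕ}
    (α β : R) (hj : ∑ i ∈ range j, d i = 0) (t : ℕ) :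
    ∑ i ∈ range t, (if i < j then α else β) * d i
      = (if t ≤ j then α else β) * ∑ i ∈ range t, d i := by
  by_cases htj : t ≤ j
  · rw [if_pos htj, mul_sum]
    exact sum_congr rfl fun i hi => by rw [if_pos ((mem_range.1 hi).trans_le htj)]
  · have hjt : j ≤ t := (not_le.1 htj).le
    have head : ∑ i ∈ range j, (if i < j then α else β) * d i = 0 := by
      rw [← mul_zero α, ← hj, mul_sum]
      exact sum_congr rfl fun i hi => by rw [if_pos (mem_range.1 hi)]
    rw [if_neg htj, ← sum_range_add_sum_Ico _ hjt, head, ← sum_range_add_sum_Ico d hjt, hj,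
      zero_add, zero_add, mul_sum]
    exact sum_congr rfl fun i hi => by rw [if_neg (not_lt.2 (mem_Ico.1 hi).1)]

theorem Dominates_s19.of_sub_eq_ite_mul {R : Type*} [CommRing R] [PartialOrder R] [IsOrderedRing R]
    {r j : ℕ} {f g x y : ℕ → R} {α β : R} (hα : 0 ≤ α) (hβ : 0 ≤ β) (hxy : Dominates_s19 r x y)
    (hj : ∑ i ∈ range j, x i = ∑ i ∈ range j, y i)
    (hfg : ∀ i, f i - g i = (if i < j then α else β) * (x i - y i)) : Dominates_s19 r f g := by
  have key : ∀ t, ∑ i ∈ range t, f i - ∑ i ∈ range t, g i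
      = (if t ≤ j then α else β) * (∑ i ∈ range t, x i - ∑ i ∈ range t, y i) := by
    intro t
    simp only [← sum_sub_distrib, hfg]
    exact sum_range_ite_mul_of_sum_range_eq_zero α β (by rw [sum_sub_distrib, hj, sub_self]) t
  refine ⟨fun t ht => ?_, ?_⟩
  · rw [← sub_nonneg, key]
    exact mul_nonneg (by split_ifs <;> assumption) (sub_nonneg.2 (hxy.1 t ht))
  · rw [← sub_eq_zero, key, hxy.2, sub_self, mul_zero]

theorem antitone_ite {α β : Type*} [Preorder α] [Preorder β] {f g : α → β} {j : α}
    [DecidablePred (· < j)] (hf : Antitone f) (hg : Antitone g)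
    (hfg : ∀ a b, a < j → ¬ b < j → g b ≤ f a) :
    Antitone fun i => if i < j then f i else g i := by
  intro a b hab
  dsimp only
  split_ifs with hb ha ha
  · exact hf hab
  · exact absurd (hab.trans_lt hb) ha
  · exact hfg a b ha hb
  · exact hg hab

section Summands

variable {K : Type*} [Field K] (j : ℕ) (c : K) (x y : ℕ → K)

/-- `λ¹` of the decomposition, for `x = λ` and `c = λ_j`. -/
def firstSummand : ℕ → K := fun i => if i < j then 1 else x i / c

/-- `λ²` of the decomposition, for `x = λ` and `c = λ_j`. -/
def secondSummand : ℕ → K := fun i => if i < j then x i - 1 else x i * (c - 1) / c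

variable {j c x y}

theorem firstSummand_add_secondSummand (hc : c ≠ 0) (i : ℕ) :
    firstSummand j c x i + secondSummand j c x i = x i := by
  unfold firstSummand secondSummand
  split_ifs
  · ring
  · field_simp
    ring

theorem firstSummand_sub_firstSummand (i : ℕ) :
    firstSummand j c x i - firstSummand j c y i
      = (if i < j then 0 else c⁻¹) * (x i - y i) := by
  unfold firstSummand
  split_ifs <;> ring

theorem secondSummand_sub_secondSummand (i : ℕ) :
    secondSummand j c x i - secondSummand j c y i
      = (if i < j then 1 else (c - 1) / c) * (x i - y i) := by
  unfold secondSummand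
  split_ifs <;> ring

variable [LinearOrder K] [IsStrictOrderedRing K]

theorem firstSummand_nonneg (hc : 0 ≤ c) (hx : ∀ i, 0 ≤ x i) (i : ℕ) :
    0 ≤ firstSummand j c x i := by
  unfold firstSummand
  split_ifs
  · exact zero_le_one
  · exact div_nonneg (hx i) hc

theorem secondSummand_nonneg (hc : 1 ≤ c) (hx : ∀ i, 0 ≤ x i) (hhead : ∀ i, i < j → c ≤ x i)
    (i : ℕ) : 0 ≤ secondSummand j c x i := by
  unfold secondSummand
  split_ifs with hi
  · linarith [hhead i hi]
  · exact div_nonneg (mul_nonneg (hx i) (sub_nonneg.2 hc)) (zero_le_one.trans hc)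

theorem antitone_firstSummand (hc : 0 < c) (hx : Antitone x) (htail : ∀ i, j ≤ i → x i ≤ c) :
    Antitone (firstSummand j c x) :=
  antitone_ite antitone_const (fun _ _ hab => div_le_div_of_nonneg_right (hx hab) hc.le)
    fun _ b _ hb => (div_le_one hc).2 (htail b (not_lt.1 hb))

theorem antitone_secondSummand (hc : 1 ≤ c) (hx : Antitone x) (hhead : ∀ i, i < j → c ≤ x i)
    (htail : ∀ i, j ≤ i → x i ≤ c) : Antitone (secondSummand j c x) := by
  have hc1 : 0 ≤ c - 1 := sub_nonneg.2 hc
  refine antitone_ite (fun _ _ hab => sub_le_sub_right (hx hab) 1)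
    (fun _ _ hab => by gcongr; exact hx hab) fun a b ha hb => ?_
  calc x b * (c - 1) / c ≤ c * (c - 1) / c := by gcongr; exact htail b (not_lt.1 hb)
    _ = c - 1 := by field_simp
    _ ≤ x a - 1 := sub_le_sub_right (hhead a ha) 1

theorem summands_antitone_nonneg_add (hj : 1 ≤ j) (hc : 1 ≤ c) (hx : Antitone x) (hx0 : ∀ i, 0 ≤ x i)
    (hhead : c ≤ x (j - 1)) (htail : x j ≤ c) :
    Antitone (firstSummand j c x) ∧ Antitone (secondSummand j c x) ∧
      (∀ i, 0 ≤ firstSummand j c x i) ∧ (∀ i, 0 ≤ secondSummand j c x i) ∧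
      ∀ i, x i = firstSummand j c x i + secondSummand j c x i := by
  have hc0 : 0 < c := zero_lt_one.trans_le hc
  have head : ∀ i, i < j → c ≤ x i := fun i hi => hhead.trans (hx (by omega))
  have tail : ∀ i, j ≤ i → x i ≤ c := fun i hi => (hx hi).trans htail
  exact ⟨antitone_firstSummand hc0 hx tail, antitone_secondSummand hc hx head tail,
    firstSummand_nonneg hc0.le hx0, secondSummand_nonneg hc hx0 head,
    fun i => (firstSummand_add_secondSummand hc0.ne' i).symm⟩

end Summands

theorem stmt19_general (r j : ℕ) (hj1 : 1 ≤ j) (hjr : j ≤ r)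
    (lam mu : ℕ → ℕ) (hlam : Antitone lam) (hmu : Antitone mu)
    (hmu0 : ∀ i, r ≤ i → mu i = 0)
    (hsz : ∑ i ∈ Finset.range r, lam i = ∑ i ∈ Finset.range r, mu i)
    (hdom : ∀ t, t ≤ r → ∑ i ∈ Finset.range t, mu i ≤ ∑ i ∈ Finset.range t, lam i)
    (hj : ∑ i ∈ Finset.range j, lam i = ∑ i ∈ Finset.range j, mu i)
    (hpos : 0 < lam (j - 1))
    (l1 l2 m1 m2 : ℕ → ℝ)
    (hl1 : ∀ i, l1 i = if i < j then 1 else (lam i : ℝ) / (lam (j - 1) : ℝ))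
    (hl2 : ∀ i, l2 i = if i < j then (lam i : ℝ) - 1
      else (lam i : ℝ) * ((lam (j - 1) : ℝ) - 1) / (lam (j - 1) : ℝ))
    (hm1 : ∀ i, m1 i = if i < j then 1 else (mu i : ℝ) / (lam (j - 1) : ℝ))
    (hm2 : ∀ i, m2 i = if i < j then (mu i : ℝ) - 1
      else (mu i : ℝ) * ((lam (j - 1) : ℝ) - 1) / (lam (j - 1) : ℝ)) :
    Antitone l1 ∧ Antitone l2 ∧ Antitone m1 ∧ Antitone m2 ∧
    (∀ i, 0 ≤ l1 i) ∧ (∀ i, 0 ≤ l2 i) ∧ (∀ i, 0 ≤ m1 i) ∧ (∀ i, 0 ≤ m2 i) ∧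
    (∀ i, (lam i : ℝ) = l1 i + l2 i) ∧ (∀ i, (mu i : ℝ) = m1 i + m2 i) ∧
    (∀ t, t ≤ r → ∑ i ∈ Finset.range t, m1 i ≤ ∑ i ∈ Finset.range t, l1 i) ∧
    (∑ i ∈ Finset.range r, l1 i = ∑ i ∈ Finset.range r, m1 i) ∧
    (∀ t, t ≤ r → ∑ i ∈ Finset.range t, m2 i ≤ ∑ i ∈ Finset.range t, l2 i) ∧
    (∑ i ∈ Finset.range r, l2 i = ∑ i ∈ Finset.range r, m2 i) := by
  have hdomN : Dominates_s19 r lam mu := ⟨hdom, hsz⟩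
  have hmu_head : lam (j - 1) ≤ mu (j - 1) :=
    hdomN.apply_le_of_sum_range_succ_eq (by omega) (by rwa [Nat.sub_add_cancel hj1])
  have hmu_tail : mu j ≤ lam (j - 1) := by
    rcases hjr.lt_or_eq with hjr | rfl
    · exact (hdomN.apply_le_of_sum_range_eq hjr hj).trans (hlam (Nat.sub_le j 1))
    · simp [hmu0]
  have hc : 1 ≤ (lam (j - 1) : ℝ) := by exact_mod_cast hpos
  obtain ⟨hl1_anti, hl2_anti, hl1_nonneg, hl2_nonneg, hlam_eq⟩ :=
    summands_antitone_nonneg_add (x := fun i => (lam i : ℝ)) hj1 hc (Nat.mono_cast.comp_antitone hlam)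
      (fun i => Nat.cast_nonneg (lam i)) le_rfl (by exact_mod_cast hlam (Nat.sub_le j 1))
  obtain ⟨hm1_anti, hm2_anti, hm1_nonneg, hm2_nonneg, hmu_eq⟩ :=
    summands_antitone_nonneg_add (x := fun i => (mu i : ℝ)) hj1 hc (Nat.mono_cast.comp_antitone hmu)
      (fun i => Nat.cast_nonneg (mu i)) (by exact_mod_cast hmu_head) (by exact_mod_cast hmu_tail)
  have hdomR := hdomN.natCast (R := ℝ)
  have hjR : ∑ i ∈ range j, (lam i : ℝ) = ∑ i ∈ range j, (mu i : ℝ) := by exact_mod_cast hj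
  have dom1 := hdomR.of_sub_eq_ite_mul le_rfl (inv_nonneg.2 (zero_le_one.trans hc)) hjR
    firstSummand_sub_firstSummand
  have dom2 := hdomR.of_sub_eq_ite_mul zero_le_one
    (div_nonneg (sub_nonneg.2 hc) (zero_le_one.trans hc)) hjR secondSummand_sub_secondSummand
  obtain rfl : l1 = firstSummand j (lam (j - 1) : ℝ) fun i => (lam i : ℝ) := funext hl1
  obtain rfl : l2 = secondSummand j (lam (j - 1) : ℝ) fun i => (lam i : ℝ) := funext hl2
  obtain rfl : m1 = firstSummand j (lam (j - 1) : ℝ) fun i => (mu i : ℝ) := funext hm1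
  obtain rfl : m2 = secondSummand j (lam (j - 1) : ℝ) fun i => (mu i : ℝ) := funext hm2
  exact ⟨hl1_anti, hl2_anti, hm1_anti, hm2_anti, hl1_nonneg, hl2_nonneg, hm1_nonneg, hm2_nonneg,
    hlam_eq, hmu_eq, dom1.1, dom1.2, dom2⟩

/-- let `lam ≥_Dom mu` be integer partitions of equal size with at most `r`
parts, and suppose the first `j` partial sums agree (`1 ≤ j ≤ r`) and `lam (j-1) > 0`
(0-indexed parts, so `lam (j-1)` is the `j`-th part `λ_j`). Define the real sequences
`l1 = (1^j) ⌢ (1/λ_j)·(tail of lam)`, `l2 = (lam_{≤ j} - 1^j) ⌢ ((λ_j - 1)/λ_j)·(tail)`,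
and `m1, m2` analogously with `mu`-tails. Then all four are weakly decreasing and
nonnegative, `lam = l1 + l2`, `mu = m1 + m2`, and `l1 ≥_Dom m1`, `l2 ≥_Dom m2`
(dominance of real partitions: leading partial sums weakly exceed, total sums equal). -/
theorem stmt19 (r j : ℕ) (hj1 : 1 ≤ j) (hjr : j ≤ r)
    (lam mu : ℕ → ℕ) (hlam : Antitone lam) (hmu : Antitone mu)
    (hlam0 : ∀ i, r ≤ i → lam i = 0) (hmu0 : ∀ i, r ≤ i → mu i = 0)
    (hsz : ∑ i ∈ Finset.range r, lam i = ∑ i ∈ Finset.range r, mu i)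
    (hdom : ∀ t, t ≤ r → ∑ i ∈ Finset.range t, mu i ≤ ∑ i ∈ Finset.range t, lam i)
    (hj : ∑ i ∈ Finset.range j, lam i = ∑ i ∈ Finset.range j, mu i)
    (hpos : 0 < lam (j - 1))
    (l1 l2 m1 m2 : ℕ → ℝ)
    (hl1 : ∀ i, l1 i = if i < j then 1 else (lam i : ℝ) / (lam (j - 1) : ℝ))
    (hl2 : ∀ i, l2 i = if i < j then (lam i : ℝ) - 1
      else (lam i : ℝ) * ((lam (j - 1) : ℝ) - 1) / (lam (j - 1) : ℝ))
    (hm1 : ∀ i, m1 i = if i < j then 1 else (mu i : ℝ) / (lam (j - 1) : ℝ))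
    (hm2 : ∀ i, m2 i = if i < j then (mu i : ℝ) - 1
      else (mu i : ℝ) * ((lam (j - 1) : ℝ) - 1) / (lam (j - 1) : ℝ)) :
    Antitone l1 ∧ Antitone l2 ∧ Antitone m1 ∧ Antitone m2 ∧
    (∀ i, 0 ≤ l1 i) ∧ (∀ i, 0 ≤ l2 i) ∧ (∀ i, 0 ≤ m1 i) ∧ (∀ i, 0 ≤ m2 i) ∧
    (∀ i, (lam i : ℝ) = l1 i + l2 i) ∧ (∀ i, (mu i : ℝ) = m1 i + m2 i) ∧
    (∀ t, t ≤ r → ∑ i ∈ Finset.range t, m1 i ≤ ∑ i ∈ Finset.range t, l1 i) ∧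
    (∑ i ∈ Finset.range r, l1 i = ∑ i ∈ Finset.range r, m1 i) ∧
    (∀ t, t ≤ r → ∑ i ∈ Finset.range t, m2 i ≤ ∑ i ∈ Finset.range t, l2 i) ∧
    (∑ i ∈ Finset.range r, l2 i = ∑ i ∈ Finset.range r, m2 i) :=
  stmt19_general r j hj1 hjr lam mu hlam hmu hmu0 hsz hdom hj hpos l1 l2 m1 m2 hl1 hl2 hm1 hm2
end
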